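/- arXiv:2109.14260 — 10 statements merged into one kernel-verified Lean document; each statement's English description precedes it below -/
import Mathlib

section
/- Let 0 ≤ α1 < α2. For every S1 ∈ D_{f,c}(α1) and every S2 ∈ D_{f,c}(α2), it holds that f(S1) ≤ f(S2). -/
open Finset

/-- The agent's demand at contract `α`: sets maximizing `α·f(S) − c(S)`. -/
def Demand (n : ℕ) (f : Finset (Fin n) → ℝ) (c : Fin n → ℝ) (α : ℝ) :
    Set (Finset (Fin n)) :=
  {S | ∀ T : Finset (Fin n), α * f T - ∑ a ∈ T, c a ≤ α * f S - ∑ a ∈ S, c a}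

/-- `V_{f,c}(α)`: the maximal value of `f` over the demand at `α`. -/
noncomputable def Vfc (n : ℕ) (f : Finset (Fin n) → ℝ) (c : Fin n → ℝ) (α : ℝ) : ℝ :=
  sSup (f '' Demand n f c α)

/-- The critical set `C_{f,c}`. -/
def Critical (n : ℕ) (f : Finset (Fin n) → ℝ) (c : Fin n → ℝ) : Set ℝ :=
  {α | 0 < α ∧ α ≤ 1 ∧
    ∀ ε : ℝ, 0 < ε → ε ≤ α → Vfc n f c (α - ε) ≠ Vfc n f c α}

/-- Monotonicity of demanded values in the contract parameter `α`. -/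
theorem demand_value_monotone (n : ℕ) (f : Finset (Fin n) → ℝ) (c : Fin n → ℝ)
    (hf0 : f ∅ = 0) (hmono : ∀ S T : Finset (Fin n), S ⊆ T → f S ≤ f T)
    (hf01 : ∀ S : Finset (Fin n), 0 ≤ f S ∧ f S ≤ 1) (hc : ∀ a : Fin n, 0 < c a)
    (α₁ α₂ : ℝ) (h0 : 0 ≤ α₁) (h12 : α₁ < α₂)
    (S₁ S₂ : Finset (Fin n)) (hS₁ : S₁ ∈ Demand n f c α₁) (hS₂ : S₂ ∈ Demand n f c α₂) :
    f S₁ ≤ f S₂ := by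
  have h1 := hS₁ S₂
  have h2 := hS₂ S₁
  nlinarith [h1, h2]
end

section
/- The function V_{f,c} is right-continuous and locally constant to the right: for every α > 0 there exists δ > 0 such that V_{f,c}(β) = V_{f,c}(α) for every β ∈ [α, α + δ]; in particular V_{f,c}(α) = lim_{ε→0+} V_{f,c}(α + ε). -/
open Finset

lemma demand_nonempty (n : ℕ) (f : Finset (Fin n) → ℝ) (c : Fin n → ℝ) (α : ℝ) :
    (Demand n f c α).Nonempty := by
  obtain ⟨S, hS⟩ := Finite.exists_max (fun S : Finset (Fin n) => α * f S - ∑ a ∈ S, c a)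
  exact ⟨S, fun T => hS T⟩

lemma Vfc_exists_opt (n : ℕ) (f : Finset (Fin n) → ℝ) (c : Fin n → ℝ) (α : ℝ) :
    ∃ S, S ∈ Demand n f c α ∧ f S = Vfc n f c α ∧
      ∀ T ∈ Demand n f c α, f T ≤ f S := by
  classical
  obtain ⟨S0, hS0⟩ := demand_nonempty n f c α
  set D : Finset (Finset (Fin n)) := Finset.univ.filter (fun S => S ∈ Demand n f c α)
    with hD
  have hDne : D.Nonempty := ⟨S0, by simp [hD, hS0]⟩
  obtain ⟨S, hSD, hmax⟩ := D.exists_max_image f hDne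
  have hSmem : S ∈ Demand n f c α := by simpa [hD] using hSD
  refine ⟨S, hSmem, ?_, fun T hT => hmax T (by simp [hD, hT])⟩
  apply le_antisymm
  · exact le_csSup ((Set.toFinite _).image f).bddAbove (Set.mem_image_of_mem f hSmem)
  · apply csSup_le ((Set.Nonempty.image f ⟨S, hSmem⟩ : (f '' Demand n f c α).Nonempty))
    rintro y ⟨T, hT, rfl⟩
    exact hmax T (by simp [hD, hT])

/-- `V_{f,c}` is locally constant to the right of every `α > 0`; in particular it is
right-continuous: `V_{f,c}(α) = lim_{ε → 0⁺} V_{f,c}(α + ε)`. -/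
theorem Vfc_right_continuous (n : ℕ) (f : Finset (Fin n) → ℝ) (c : Fin n → ℝ)
    (hf0 : f ∅ = 0) (hmono : ∀ S T : Finset (Fin n), S ⊆ T → f S ≤ f T)
    (hf01 : ∀ S : Finset (Fin n), 0 ≤ f S ∧ f S ≤ 1) (hc : ∀ a : Fin n, 0 < c a)
    (α : ℝ) (hα : 0 < α) :
    (∃ δ : ℝ, 0 < δ ∧ ∀ β : ℝ, α ≤ β → β ≤ α + δ → Vfc n f c β = Vfc n f c α) ∧
    Filter.Tendsto (fun β => Vfc n f c β) (nhdsWithin α (Set.Ioi α))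
      (nhds (Vfc n f c α)) := by
  classical
  obtain ⟨S, hS, hSval, hSmax⟩ := Vfc_exists_opt n f c α
  set u : ℝ → Finset (Fin n) → ℝ := fun β T => β * f T - ∑ a ∈ T, c a with hu
  set M : ℝ := u α S with hM
  set v : ℝ := f S with hv
  set B : Finset (Finset (Fin n)) := Finset.univ.filter (fun T => u α T < M) with hB
  set δ : ℝ := (if h : B.Nonempty then B.inf' h (fun T => M - u α T) else 1) / 2 with hδ
  have hδpos : 0 < δ := by
    rw [hδ]
    split_ifs with h
    · have : (0:ℝ) < B.inf' h (fun T => M - u α T) := by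
        rw [Finset.lt_inf'_iff]
        intro T hT
        have : u α T < M := by simpa [hB] using hT
        linarith
      linarith
    · norm_num
  have hinf : ∀ T, u α T < M → 2 * δ ≤ M - u α T := by
    intro T hT
    have hTB : T ∈ B := by simp [hB, hT]
    have hne : B.Nonempty := ⟨T, hTB⟩
    have h1 : B.inf' hne (fun T => M - u α T) ≤ M - u α T :=
      Finset.inf'_le _ hTB
    have h2 : 2 * δ = B.inf' hne (fun T => M - u α T) := by
      rw [hδ, dif_pos hne]; ring
    rw [h2]; exact h1
  have key : ∀ β : ℝ, α ≤ β → β ≤ α + δ → Vfc n f c β = Vfc n f c α := by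
    intro β hβ1 hβ2
    have hε0 : 0 ≤ β - α := by linarith
    have hεδ : β - α ≤ δ := by linarith
    -- u β T = u α T + (β - α) * f T
    have husplit : ∀ T, u β T = u α T + (β - α) * f T := by
      intro T; simp only [hu]; ring
    -- Any T not in Demand α has u α T < M
    have hle : ∀ T, u α T ≤ M := fun T => hS T
    -- strict bound for non-demand sets
    have hstrict : ∀ T, u α T < M → u β T < u β S := by
      intro T hT
      have h2 := hinf T hT
      have hfT := hf01 T
      have hfS0 : 0 ≤ v := (hf01 S).1
      rw [husplit, husplit]
      have h3 : (β - α) * f T ≤ (β - α) * 1 := by nlinarith [hfT.2]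
      have h4 : 0 ≤ (β - α) * v := mul_nonneg hε0 hfS0
      simp only [← hM, ← hv]
      nlinarith
    -- bound for demand sets
    have hdem : ∀ T ∈ Demand n f c α, u β T ≤ u β S := by
      intro T hT
      have h1 : u α T = M := le_antisymm (hle T) (hT S)
      have h2 : f T ≤ v := hSmax T hT
      rw [husplit, husplit, h1, ← hM, ← hv]
      nlinarith
    -- S is in Demand β
    have hSβ : S ∈ Demand n f c β := by
      intro T
      by_cases hT : u α T < M
      · exact (hstrict T hT).le
      · have hTM : u α T = M := le_antisymm (hle T) (not_lt.mp hT)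
        have hTdem : T ∈ Demand n f c α := by
          intro T'; rw [show α * f T - ∑ a ∈ T, c a = u α T from rfl, hTM]; exact hle T'
        exact hdem T hTdem
    obtain ⟨S', hS', hS'val, hS'max⟩ := Vfc_exists_opt n f c β
    have hvS' : v ≤ f S' := hS'max S hSβ
    have hS'dem : S' ∈ Demand n f c α := by
      by_contra hcon
      have : u α S' < M := by
        rcases lt_or_eq_of_le (hle S') with h | h
        · exact h
        · exact absurd (fun T' => by
            rw [show α * f S' - ∑ a ∈ S', c a = u α S' from rfl, h]; exact hle T') hcon
      exact absurd (hS' S) (not_le.mpr (hstrict S' this))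
    have hS'v : f S' ≤ v := hSmax S' hS'dem
    rw [← hS'val, ← hSval]
    linarith
  refine ⟨⟨δ, hδpos, key⟩, ?_⟩
  have hmem : Set.Ioo α (α + δ) ∈ nhdsWithin α (Set.Ioi α) :=
    Ioo_mem_nhdsGT_of_mem ⟨le_refl α, by linarith⟩
  apply Filter.Tendsto.congr' _ tendsto_const_nhds
  filter_upwards [hmem] with β hβ
  exact (key β hβ.1.le hβ.2.le).symm
end

section
/- If f is additive, i.e., f(S) = Σ_{a∈S} f({a}) for all S ⊆ A, with f({a}) > 0 for every action a, then every critical value is the cost-to-value ratio of some single action: C_{f,c} ⊆ {c(a)/f({a}) : a ∈ A}. -/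
open Finset

lemma obj_eq_sum (n : ℕ) (f : Finset (Fin n) → ℝ) (c : Fin n → ℝ)
    (hadd : ∀ S : Finset (Fin n), f S = ∑ a ∈ S, f {a}) (α : ℝ) (S : Finset (Fin n)) :
    α * f S - ∑ a ∈ S, c a = ∑ a ∈ S, (α * f {a} - c a) := by
  rw [hadd, Finset.mul_sum, Finset.sum_sub_distrib]

lemma demand_eq (n : ℕ) (f : Finset (Fin n) → ℝ) (c : Fin n → ℝ)
    (hadd : ∀ S : Finset (Fin n), f S = ∑ a ∈ S, f {a}) (α : ℝ)
    (hne : ∀ a : Fin n, α * f {a} ≠ c a) :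
    Demand n f c α = {Finset.univ.filter (fun a => c a < α * f {a})} := by
  set g : Fin n → ℝ := fun a => α * f {a} - c a with hg
  set P : Finset (Fin n) := Finset.univ.filter (fun a => c a < α * f {a}) with hP
  have hPos : ∀ a ∈ P, 0 < g a := by
    intro a ha
    rw [hP, Finset.mem_filter] at ha
    simp [hg]; linarith [ha.2]
  have hNeg : ∀ a, a ∉ P → g a < 0 := by
    intro a ha
    have h1 : ¬ c a < α * f {a} := fun hlt =>
      ha (Finset.mem_filter.mpr ⟨Finset.mem_univ a, hlt⟩)
    simp only [hg]
    rcases lt_or_eq_of_le (not_lt.mp h1) with h | h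
    · linarith
    · exact absurd h (hne a)
  have hle : ∀ T : Finset (Fin n), ∑ a ∈ T, g a ≤ ∑ a ∈ P, g a := by
    intro T
    have h1 : ∑ a ∈ T, g a = ∑ a ∈ T ∩ P, g a + ∑ a ∈ T \ P, g a :=
      (Finset.sum_inter_add_sum_sdiff T P g).symm
    have h2 : ∑ a ∈ T \ P, g a ≤ 0 := by
      apply Finset.sum_nonpos
      intro a ha
      exact le_of_lt (hNeg a (Finset.mem_sdiff.mp ha).2)
    have h3 : ∑ a ∈ T ∩ P, g a ≤ ∑ a ∈ P, g a := by
      apply Finset.sum_le_sum_of_subset_of_nonneg Finset.inter_subset_right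
      intro a ha _
      exact le_of_lt (hPos a ha)
    linarith
  ext S
  simp only [Demand, Set.mem_setOf_eq, Set.mem_singleton_iff]
  constructor
  · intro hS
    have h1 : ∑ a ∈ P, g a ≤ ∑ a ∈ S, g a := by
      have := hS P
      rwa [obj_eq_sum n f c hadd, obj_eq_sum n f c hadd] at this
    have hsplitS : ∑ a ∈ S, g a = ∑ a ∈ S ∩ P, g a + ∑ a ∈ S \ P, g a :=
      (Finset.sum_inter_add_sum_sdiff S P g).symm
    have hsplitP : ∑ a ∈ P, g a = ∑ a ∈ S ∩ P, g a + ∑ a ∈ P \ S, g a := by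
      rw [Finset.inter_comm]
      exact (Finset.sum_inter_add_sum_sdiff P S g).symm
    have hPS : (0:ℝ) ≤ ∑ a ∈ P \ S, g a := by
      apply Finset.sum_nonneg
      intro a ha
      exact le_of_lt (hPos a (Finset.mem_sdiff.mp ha).1)
    have hSP : ∑ a ∈ S \ P, g a ≤ 0 := by
      apply Finset.sum_nonpos
      intro a ha
      exact le_of_lt (hNeg a (Finset.mem_sdiff.mp ha).2)
    have hd1 : S \ P = ∅ := by
      by_contra h
      have hne' : (S \ P).Nonempty := Finset.nonempty_iff_ne_empty.mpr h
      have : ∑ a ∈ S \ P, g a < 0 := by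
        apply Finset.sum_neg (fun a ha => hNeg a (Finset.mem_sdiff.mp ha).2) hne'
      linarith
    have hd2 : P \ S = ∅ := by
      by_contra h
      have hne' : (P \ S).Nonempty := Finset.nonempty_iff_ne_empty.mpr h
      have : 0 < ∑ a ∈ P \ S, g a := by
        apply Finset.sum_pos (fun a ha => hPos a (Finset.mem_sdiff.mp ha).1) hne'
      linarith
    exact Finset.Subset.antisymm (Finset.sdiff_eq_empty_iff_subset.mp hd1)
      (Finset.sdiff_eq_empty_iff_subset.mp hd2)
  · intro hS
    subst hS
    intro T
    rw [obj_eq_sum n f c hadd, obj_eq_sum n f c hadd]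
    exact hle T

lemma Vfc_eq (n : ℕ) (f : Finset (Fin n) → ℝ) (c : Fin n → ℝ)
    (hadd : ∀ S : Finset (Fin n), f S = ∑ a ∈ S, f {a}) (α : ℝ)
    (hne : ∀ a : Fin n, α * f {a} ≠ c a) :
    Vfc n f c α = f (Finset.univ.filter (fun a => c a < α * f {a})) := by
  rw [Vfc, demand_eq n f c hadd α hne, Set.image_singleton, csSup_singleton]

/-- For additive `f`, every critical value is the cost-to-value ratio of a single action. -/
theorem critical_set_additive (n : ℕ) (f : Finset (Fin n) → ℝ) (c : Fin n → ℝ)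
    (hf0 : f ∅ = 0) (hmono : ∀ S T : Finset (Fin n), S ⊆ T → f S ≤ f T)
    (hf01 : ∀ S : Finset (Fin n), 0 ≤ f S ∧ f S ≤ 1) (hc : ∀ a : Fin n, 0 < c a)
    (hadd : ∀ S : Finset (Fin n), f S = ∑ a ∈ S, f {a})
    (hpos : ∀ a : Fin n, 0 < f {a}) :
    Critical n f c ⊆ {x : ℝ | ∃ a : Fin n, x = c a / f {a}} := by
  intro α hα
  obtain ⟨hα0, hα1, hcrit⟩ := hα
  by_contra hcon
  simp only [Set.mem_setOf_eq, not_exists] at hcon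
  have hne : ∀ a : Fin n, α * f {a} ≠ c a := by
    intro a h
    exact hcon a (by field_simp [ne_of_gt (hpos a)]; linarith [h])
  set P : Finset (Fin n) := Finset.univ.filter (fun a => c a < α * f {a}) with hPdef
  rcases P.eq_empty_or_nonempty with hP | hP
  · -- P empty: take ε = α
    apply hcrit α hα0 le_rfl
    have hne0 : ∀ a : Fin n, (α - α) * f {a} ≠ c a := by
      intro a
      simp
      exact ne_of_lt (hc a)
    rw [Vfc_eq n f c hadd α hne, Vfc_eq n f c hadd (α - α) hne0]
    congr 1
    rw [← hPdef, hP]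
    ext a
    simp [ne_of_gt (hc a), not_lt.mpr (le_of_lt (hc a))]
  · -- P nonempty
    set m : ℝ := P.inf' hP (fun a => α * f {a} - c a) with hm
    have hm0 : 0 < m := by
      rw [hm, Finset.lt_inf'_iff]
      intro a ha
      rw [hPdef, Finset.mem_filter] at ha
      linarith [ha.2]
    set ε : ℝ := min α (m / 2) with hε
    have hε0 : 0 < ε := lt_min hα0 (by linarith)
    have hεα : ε ≤ α := min_le_left _ _
    apply hcrit ε hε0 hεα
    have hkey : ∀ a : Fin n, (c a < (α - ε) * f {a} ↔ c a < α * f {a}) ∧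
        (α - ε) * f {a} ≠ c a := by
      intro a
      by_cases ha : a ∈ P
      · have hma : m ≤ α * f {a} - c a := by
          rw [hm]
          exact Finset.inf'_le _ ha
        have hfa1 : f {a} ≤ 1 := (hf01 {a}).2
        have hfa0 : 0 < f {a} := hpos a
        have hεf : ε * f {a} ≤ m / 2 := by
          calc ε * f {a} ≤ ε * 1 := by
                apply mul_le_mul_of_nonneg_left hfa1 (le_of_lt hε0)
            _ = ε := mul_one ε
            _ ≤ m / 2 := min_le_right _ _
        have h1 : c a < (α - ε) * f {a} := by nlinarith
        rw [hPdef, Finset.mem_filter] at ha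
        exact ⟨⟨fun _ => ha.2, fun _ => h1⟩, ne_of_gt h1⟩
      · have h1 : ¬ c a < α * f {a} := fun hlt =>
          ha (Finset.mem_filter.mpr ⟨Finset.mem_univ a, hlt⟩)
        have h2 : α * f {a} < c a := lt_of_le_of_ne (not_lt.mp h1) (hne a)
        have hfa0 : 0 < f {a} := hpos a
        have h3 : (α - ε) * f {a} < c a := by nlinarith
        exact ⟨⟨fun h => absurd h (asymm h3), fun h => absurd h h1⟩, ne_of_lt h3⟩
    have hne' : ∀ a : Fin n, (α - ε) * f {a} ≠ c a := fun a => (hkey a).2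
    rw [Vfc_eq n f c hadd α hne, Vfc_eq n f c hadd (α - ε) hne']
    congr 1
    ext a
    simp only [Finset.mem_filter, Finset.mem_univ, true_and]
    exact (hkey a).1
end

section
/- Let f be a gross substitutes function and let α > 0. If α ∉ Cand_{f,c}(a1, a2) for every unordered pair a1 ≠ a2 in A ∪ {null}, then α is not a critical value: α ∉ C_{f,c}. -/
open Finset

/-- `f` is a gross substitutes function. -/
def GrossSubstitutes (n : ℕ) (f : Finset (Fin n) → ℝ) : Prop :=
  ∀ p q : Fin n → ℝ, (∀ i, 0 ≤ p i) → (∀ i, p i ≤ q i) →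
    ∀ S : Finset (Fin n),
      (∀ S' : Finset (Fin n), f S' - ∑ i ∈ S', p i ≤ f S - ∑ i ∈ S, p i) →
      ∃ T : Finset (Fin n),
        (∀ T' : Finset (Fin n), f T' - ∑ i ∈ T', q i ≤ f T - ∑ i ∈ T, q i) ∧
        ∀ i ∈ S, q i = p i → i ∈ T

/-- Cost extended to `A ∪ {null}` (with `c(null) = 0`). -/
def cOpt (n : ℕ) (c : Fin n → ℝ) : Option (Fin n) → ℝ :=
  fun a => a.elim 0 c

/-- Marginal value `f(a | S)` extended to `A ∪ {null}` (with `f(null | S) = 0`). -/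
def margOpt (n : ℕ) (f : Finset (Fin n) → ℝ) (a : Option (Fin n))
    (S : Finset (Fin n)) : ℝ :=
  a.elim 0 (fun i => f (insert i S) - f S)

/-- The candidate critical values for the pair `(a1, a2)`. -/
def Cand (n : ℕ) (f : Finset (Fin n) → ℝ) (c : Fin n → ℝ)
    (a1 a2 : Option (Fin n)) : Set ℝ :=
  {α | 0 < α ∧ ∃ S1 S2 : Finset (Fin n),
    α * margOpt n f a1 S1 - cOpt n c a1 = α * margOpt n f a2 S2 - cOpt n c a2 ∧
    0 ≤ α * margOpt n f a2 S2 - cOpt n c a2}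

/-- `c` is generic w.r.t. `f`: for every `α > 0` there is at most one unordered pair
`a1 ≠ a2` in `A ∪ {null}` with `α ∈ Cand_{f,c}(a1, a2)`. -/
def Generic (n : ℕ) (f : Finset (Fin n) → ℝ) (c : Fin n → ℝ) : Prop :=
  ∀ α : ℝ, 0 < α → ∀ a1 a2 a3 a4 : Option (Fin n), a1 ≠ a2 → a3 ≠ a4 →
    α ∈ Cand n f c a1 a2 → α ∈ Cand n f c a3 a4 →
    (a1 = a3 ∧ a2 = a4) ∨ (a1 = a4 ∧ a2 = a3)

section Aux

variable {n : ℕ} {f : Finset (Fin n) → ℝ} {c : Fin n → ℝ} {α : ℝ}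

private lemma mem_demand {S : Finset (Fin n)} :
    S ∈ Demand n f c α ↔
      ∀ T : Finset (Fin n), α * f T - ∑ a ∈ T, c a ≤ α * f S - ∑ a ∈ S, c a :=
  Iff.rfl

private lemma notMem_compl_of_mem {s : Finset (Fin n)} {a : Fin n} (h : a ∈ s) : a ∉ sᶜ := by
  simp [Finset.mem_compl, h]

private lemma mem_of_notMem_compl {s : Finset (Fin n)} {a : Fin n} (h : a ∉ sᶜ) : a ∈ s := by
  simpa [Finset.mem_compl] using h

private lemma demand_iff (hα : 0 < α) (S : Finset (Fin n)) :
    S ∈ Demand n f c α ↔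
      ∀ T : Finset (Fin n), f T - ∑ i ∈ T, c i / α ≤ f S - ∑ i ∈ S, c i / α := by
  have key : ∀ X : Finset (Fin n),
      f X - ∑ i ∈ X, c i / α = (α * f X - ∑ a ∈ X, c a) / α := by
    intro X
    rw [← Finset.sum_div]
    field_simp
  have hne : α ≠ 0 := ne_of_gt hα
  constructor
  · intro h T
    rw [key, key]
    exact (div_le_div_iff_of_pos_right hα).mpr (h T)
  · intro h T
    have := h T
    rw [key, key] at this
    exact (div_le_div_iff_of_pos_right hα).mp this

/-- Core gross-substitutes consequence: if some demanded set avoids `K`, then for any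
demanded `Y` there is a demanded `W` avoiding `K` that contains all of `Y` off `K`. -/
private lemma gs_demand (hα : 0 < α) (hc : ∀ a, 0 < c a) (hgs : GrossSubstitutes n f)
    (K : Finset (Fin n)) {Y Z : Finset (Fin n)}
    (hY : Y ∈ Demand n f c α) (hZ : Z ∈ Demand n f c α) (hZK : ∀ a ∈ Z, a ∉ K) :
    ∃ W ∈ Demand n f c α, (∀ a ∈ W, a ∉ K) ∧ ∀ a ∈ Y, a ∉ K → a ∈ W := by
  classical
  set p : Fin n → ℝ := fun i => c i / α with hp
  set q : Fin n → ℝ := fun i => p i + (if i ∈ K then 1 else 0) with hq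
  have hp0 : ∀ i, 0 ≤ p i := fun i => le_of_lt (div_pos (hc i) hα)
  have hpq : ∀ i, p i ≤ q i := by
    intro i
    simp only [hq]
    by_cases h : i ∈ K <;> simp [h]
  obtain ⟨W, hWq, hWsup⟩ := hgs p q hp0 hpq Y ((demand_iff hα Y).mp hY)
  have hsum : ∀ X : Finset (Fin n),
      ∑ i ∈ X, q i = (∑ i ∈ X, p i) + ((X.filter (fun a => a ∈ K)).card : ℝ) := by
    intro X
    simp only [hq]
    rw [Finset.sum_add_distrib, Finset.sum_boole]
  have hZfilter : (Z.filter (fun a => a ∈ K)) = ∅ := by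
    apply Finset.filter_eq_empty_iff.mpr
    intro a ha
    exact hZK a ha
  -- utility comparisons
  have h1 : f Z - ∑ i ∈ Z, p i ≤ f W - ∑ i ∈ W, p i - ((W.filter (fun a => a ∈ K)).card : ℝ) := by
    have := hWq Z
    rw [hsum Z, hsum W, hZfilter] at this
    simp only [Finset.card_empty, Nat.cast_zero] at this
    linarith
  have h2 : f W - ∑ i ∈ W, p i ≤ f Z - ∑ i ∈ Z, p i := (demand_iff hα Z).mp hZ W
  have hcard0 : ((W.filter (fun a => a ∈ K)).card : ℝ) = 0 := by
    have hnn : (0:ℝ) ≤ ((W.filter (fun a => a ∈ K)).card : ℝ) := Nat.cast_nonneg _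
    linarith
  have hWK : ∀ a ∈ W, a ∉ K := by
    have : (W.filter (fun a => a ∈ K)) = ∅ := by
      rw [← Finset.card_eq_zero]
      exact_mod_cast hcard0
    intro a ha haK
    have : a ∈ (W.filter (fun a => a ∈ K)) := Finset.mem_filter.mpr ⟨ha, haK⟩
    simp_all
  refine ⟨W, ?_, hWK, ?_⟩
  · rw [demand_iff hα]
    intro T
    have := (demand_iff hα Z).mp hZ T
    rw [hcard0] at h1
    linarith
  · intro a haY haK
    apply hWsup a haY
    simp [hq, haK]

/-- No two distinct comparable sets are both demanded (given no candidate value at `α`). -/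
private lemma no_comparable (hα : 0 < α) (hc : ∀ a, 0 < c a) (hgs : GrossSubstitutes n f)
    (hcand : ∀ a1 a2 : Option (Fin n), a1 ≠ a2 → α ∉ Cand n f c a1 a2)
    {X Y : Finset (Fin n)} (hX : X ∈ Demand n f c α) (hY : Y ∈ Demand n f c α)
    (hXY : X ⊆ Y) : X = Y := by
  classical
  by_contra hne
  obtain ⟨i, hiY, hiX⟩ := Finset.exists_of_ssubset (Finset.ssubset_iff_subset_ne.mpr ⟨hXY, hne⟩)
  obtain ⟨W, hW, hWK, hWsup⟩ := gs_demand hα hc hgs (insert i X)ᶜ hY hX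
    (fun a ha => notMem_compl_of_mem (Finset.mem_insert_of_mem ha))
  have hWX : W = insert i X := by
    apply Finset.Subset.antisymm
    · intro a ha
      exact mem_of_notMem_compl (hWK a ha)
    · intro a ha
      rcases Finset.mem_insert.mp ha with h | h
      · subst h
        exact hWsup a hiY (notMem_compl_of_mem (Finset.mem_insert_self a X))
      · exact hWsup a (hXY h) (notMem_compl_of_mem (Finset.mem_insert_of_mem h))
  have hueq : α * f (insert i X) - ∑ a ∈ insert i X, c a = α * f X - ∑ a ∈ X, c a := by
    have h1 := mem_demand.mp hX (insert i X)
    have h2 := mem_demand.mp hW X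
    rw [hWX] at h2
    linarith
  have hsum : ∑ a ∈ insert i X, c a = c i + ∑ a ∈ X, c a := Finset.sum_insert hiX
  exact hcand (some i) none (by simp) ⟨hα, X, ∅, by simp [margOpt, cOpt]; linarith,
    by simp [margOpt, cOpt]⟩

/-- The demand at a non-candidate value is a singleton. -/
private lemma demand_subsingleton (hα : 0 < α) (hc : ∀ a, 0 < c a)
    (hmono : ∀ S T : Finset (Fin n), S ⊆ T → f S ≤ f T)
    (hgs : GrossSubstitutes n f)
    (hcand : ∀ a1 a2 : Option (Fin n), a1 ≠ a2 → α ∉ Cand n f c a1 a2)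
    {S T : Finset (Fin n)} (hS : S ∈ Demand n f c α) (hT : T ∈ Demand n f c α) :
    S = T := by
  classical
  suffices H : ∀ m : ℕ, ∀ S T : Finset (Fin n), S ∈ Demand n f c α → T ∈ Demand n f c α →
      (S \ T).card + (T \ S).card ≤ m → S = T by
    exact H ((S \ T).card + (T \ S).card) S T hS hT le_rfl
  intro m
  induction m with
  | zero =>
    intro S T hS hT hcard
    have h1 : (S \ T) = ∅ := Finset.card_eq_zero.mp (by omega)
    have h2 : (T \ S) = ∅ := Finset.card_eq_zero.mp (by omega)
    exact Finset.Subset.antisymm (Finset.sdiff_eq_empty_iff_subset.mp h1)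
      (Finset.sdiff_eq_empty_iff_subset.mp h2)
  | succ m ih =>
    intro S T hS hT hcard
    by_contra hne
    have hTS : ¬ T ⊆ S := fun h => hne (no_comparable hα hc hgs hcand hT hS h).symm
    have hST : ¬ S ⊆ T := fun h => hne (no_comparable hα hc hgs hcand hS hT h)
    obtain ⟨i, hiT, hiS⟩ := Finset.not_subset.mp hTS
    obtain ⟨W, hW, hWK, hWsup⟩ := gs_demand hα hc hgs (insert i S)ᶜ hT hS
      (fun a ha => notMem_compl_of_mem (Finset.mem_insert_of_mem ha))
    have hWsub : W ⊆ insert i S := fun a ha => mem_of_notMem_compl (hWK a ha)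
    have hiW : i ∈ W := hWsup i hiT (notMem_compl_of_mem (Finset.mem_insert_self i S))
    have hSTW : ∀ a, a ∈ S → a ∈ T → a ∈ W := fun a haS haT =>
      hWsup a haT (notMem_compl_of_mem (Finset.mem_insert_of_mem haS))
    by_cases hWT : W = T
    · -- T \ S = {i}; seek the symmetric swap
      have hTsub : T ⊆ insert i S := hWT ▸ hWsub
      obtain ⟨j, hjS, hjT⟩ := Finset.not_subset.mp hST
      obtain ⟨W', hW', hWK', hWsup'⟩ := gs_demand hα hc hgs (insert j T)ᶜ hS hT
        (fun a ha => notMem_compl_of_mem (Finset.mem_insert_of_mem ha))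
      have hW'sub : W' ⊆ insert j T := fun a ha => mem_of_notMem_compl (hWK' a ha)
      have hjW' : j ∈ W' := hWsup' j hjS (notMem_compl_of_mem (Finset.mem_insert_self j T))
      by_cases hiW' : i ∈ W'
      · -- W' ⊇ T strictly
        have hTW' : T ⊆ W' := by
          intro a haT
          rcases Finset.mem_insert.mp (hTsub haT) with h | h
          · exact h ▸ hiW'
          · exact hWsup' a h (notMem_compl_of_mem (Finset.mem_insert_of_mem haT))
        have := no_comparable hα hc hgs hcand hT hW' hTW'
        exact hjT (this ▸ hjW')
      · -- W' ⊆ S, hence W' = S, and we get the swap pair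
        have hW'S : W' ⊆ S := by
          intro a ha
          rcases Finset.mem_insert.mp (hW'sub ha) with h | h
          · exact h ▸ hjS
          · rcases Finset.mem_insert.mp (hTsub h) with h2 | h2
            · exact absurd (h2 ▸ ha) hiW'
            · exact h2
        have hW'eqS : W' = S := no_comparable hα hc hgs hcand hW' hS hW'S
        -- set B := S.erase j ; then T = insert i B and S = insert j B
        set B : Finset (Fin n) := S.erase j with hB
        have hSB : S = insert j B := (Finset.insert_erase hjS).symm
        have hSsubjT : S ⊆ insert j T := hW'eqS ▸ hW'sub
        have hTB : T = insert i B := by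
          ext a
          constructor
          · intro haT
            rcases Finset.mem_insert.mp (hTsub haT) with h | h
            · exact Finset.mem_insert.mpr (Or.inl h)
            · refine Finset.mem_insert.mpr (Or.inr ?_)
              refine Finset.mem_erase.mpr ⟨?_, h⟩
              rintro rfl
              exact hjT haT
          · intro ha
            rcases Finset.mem_insert.mp ha with h | h
            · exact h ▸ hiT
            · have haS : a ∈ S := Finset.mem_of_mem_erase h
              have haj : a ≠ j := Finset.ne_of_mem_erase h
              rcases Finset.mem_insert.mp (hSsubjT haS) with h2 | h2
              · exact absurd h2 haj
              · exact h2
        have hiB : i ∉ B := fun h => hiS (Finset.mem_of_mem_erase h)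
        have hjB : j ∉ B := Finset.notMem_erase j S
        have hij : i ≠ j := fun h => hiS (h ▸ hjS)
        -- utility equalities
        have hsumT : ∑ a ∈ T, c a = c i + ∑ a ∈ B, c a := by
          rw [hTB]; exact Finset.sum_insert hiB
        have hsumS : ∑ a ∈ S, c a = c j + ∑ a ∈ B, c a := by
          rw [hSB]; exact Finset.sum_insert hjB
        have hueq : α * f T - ∑ a ∈ T, c a = α * f S - ∑ a ∈ S, c a :=
          le_antisymm (mem_demand.mp hS T) (mem_demand.mp hT S)
        have hBle : α * f B - ∑ a ∈ B, c a ≤ α * f S - ∑ a ∈ S, c a := mem_demand.mp hS B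
        refine hcand (some i) (some j) (by simpa using hij) ⟨hα, B, B, ?_, ?_⟩
        · simp only [margOpt, cOpt, Option.elim]
          rw [← hTB, ← hSB]
          have : α * f T - c i = α * f S - c j := by
            rw [hsumT, hsumS] at hueq; linarith
          linarith
        · simp only [margOpt, cOpt, Option.elim]
          rw [← hSB]
          rw [hsumS] at hBle
          linarith
    · -- W ≠ T contradicts the induction hypothesis
      have hWTsub : W \ T ⊆ S \ T := by
        intro a ha
        obtain ⟨haW, haT⟩ := Finset.mem_sdiff.mp ha
        rcases Finset.mem_insert.mp (hWsub haW) with h | h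
        · exact absurd (h ▸ hiT) haT
        · exact Finset.mem_sdiff.mpr ⟨h, haT⟩
      have hTWsub : T \ W ⊆ (T \ S).erase i := by
        intro a ha
        obtain ⟨haT, haW⟩ := Finset.mem_sdiff.mp ha
        refine Finset.mem_erase.mpr ⟨?_, Finset.mem_sdiff.mpr ⟨haT, ?_⟩⟩
        · rintro rfl; exact haW hiW
        · intro haS; exact haW (hSTW a haS haT)
      have hiTS : i ∈ T \ S := Finset.mem_sdiff.mpr ⟨hiT, hiS⟩
      have hc1 : (W \ T).card ≤ (S \ T).card := Finset.card_le_card hWTsub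
      have hc2 : (T \ W).card ≤ (T \ S).card - 1 := by
        calc (T \ W).card ≤ ((T \ S).erase i).card := Finset.card_le_card hTWsub
          _ = (T \ S).card - 1 := Finset.card_erase_of_mem hiTS
      have hpos : 1 ≤ (T \ S).card := Finset.card_pos.mpr ⟨i, hiTS⟩
      exact hWT (ih W T hW hT (by omega))

end Aux

/-- If `α > 0` is not a candidate critical value for any pair, then `α` is not critical. -/
theorem not_cand_not_critical (n : ℕ) (f : Finset (Fin n) → ℝ) (c : Fin n → ℝ)
    (hf0 : f ∅ = 0) (hmono : ∀ S T : Finset (Fin n), S ⊆ T → f S ≤ f T)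
    (hf01 : ∀ S : Finset (Fin n), 0 ≤ f S ∧ f S ≤ 1) (hc : ∀ a : Fin n, 0 < c a)
    (hgs : GrossSubstitutes n f)
    (α : ℝ) (hα : 0 < α)
    (hcand : ∀ a1 a2 : Option (Fin n), a1 ≠ a2 → α ∉ Cand n f c a1 a2) :
    α ∉ Critical n f c := by
  classical
  rintro ⟨-, -, hall⟩
  -- the maximizer
  obtain ⟨Sstar, -, hSmax⟩ := Finset.exists_max_image (univ : Finset (Finset (Fin n)))
      (fun S => α * f S - ∑ a ∈ S, c a) ⟨∅, mem_univ ∅⟩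
  have hS : Sstar ∈ Demand n f c α := fun T => hSmax T (mem_univ T)
  have huniq : ∀ X ∈ Demand n f c α, X = Sstar :=
    fun X hX => demand_subsingleton hα hc hmono hgs hcand hX hS
  have hDeq : Demand n f c α = {Sstar} :=
    Set.eq_singleton_iff_unique_mem.mpr ⟨hS, huniq⟩
  -- strict gap for non-maximizers
  have hgap : ∀ X : Finset (Fin n), X ≠ Sstar →
      α * f X - ∑ a ∈ X, c a < α * f Sstar - ∑ a ∈ Sstar, c a := by
    intro X hX
    rcases lt_or_eq_of_le (hSmax X (mem_univ X)) with h | h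
    · exact h
    · exfalso
      apply hX
      apply huniq
      intro T
      rw [h]
      exact hSmax T (mem_univ T)
  -- choose ε
  set u : Finset (Fin n) → ℝ := fun X => α * f X - ∑ a ∈ X, c a with hu
  set F : Finset ℝ :=
    insert α (((univ : Finset (Finset (Fin n))).erase Sstar).image (fun X => u Sstar - u X))
    with hF
  have hFne : F.Nonempty := ⟨α, Finset.mem_insert_self _ _⟩
  set m : ℝ := F.min' hFne with hm
  have hmpos : 0 < m := by
    have hmem : m ∈ F := F.min'_mem hFne
    rw [hF] at hmem
    rcases Finset.mem_insert.mp hmem with h | h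
    · exact h ▸ hα
    · obtain ⟨X, hXmem, hXeq⟩ := Finset.mem_image.mp h
      have hXne : X ≠ Sstar := (Finset.mem_erase.mp hXmem).1
      have hg := hgap X hXne
      rw [← hXeq]
      simp only [hu]
      linarith
  have hmα : m ≤ α := Finset.min'_le F α (Finset.mem_insert_self _ _)
  have hmgap : ∀ X : Finset (Fin n), X ≠ Sstar → m ≤ u Sstar - u X := by
    intro X hX
    exact Finset.min'_le F _ (Finset.mem_insert_of_mem
      (Finset.mem_image.mpr ⟨X, Finset.mem_erase.mpr ⟨hX, mem_univ X⟩, rfl⟩))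
  set ε : ℝ := m / 2 with hε
  have hε0 : 0 < ε := by positivity
  have hεα : ε ≤ α := by linarith
  have hεm : ε < m := by linarith
  -- demand at α - ε is also {Sstar}
  have hSd : Sstar ∈ Demand n f c (α - ε) := by
    intro T
    by_cases hT : T = Sstar
    · rw [hT]
    · have hgapT : ε < u Sstar - u T := lt_of_lt_of_le hεm (hmgap T hT)
      have h1 : ε * f Sstar ≤ ε := by
        have := (hf01 Sstar).2
        nlinarith
      have h2 : 0 ≤ ε * f T := mul_nonneg (le_of_lt hε0) (hf01 T).1
      simp only [hu] at hgapT
      nlinarith [hgapT]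
  have hDeq' : Demand n f c (α - ε) = {Sstar} := by
    apply Set.eq_singleton_iff_unique_mem.mpr
    refine ⟨hSd, ?_⟩
    intro X hX
    by_contra hXne
    have h1 := hX Sstar
    have hgapX : ε < u Sstar - u X := lt_of_lt_of_le hεm (hmgap X hXne)
    have h2 : ε * f Sstar ≤ ε := by
      have := (hf01 Sstar).2
      nlinarith
    have h3 : 0 ≤ ε * f X := mul_nonneg (le_of_lt hε0) (hf01 X).1
    simp only [hu] at hgapX
    nlinarith [hgapX, h1]
  -- conclude
  apply hall ε hε0 hεα
  unfold Vfc
  rw [hDeq, hDeq']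
end

section
/- Small upward perturbations of the costs cannot insert new sets into the demand: for every success probability function f, cost function c, and α > 0, there exists ε > 0 such that for every cost function ĉ with c(a) ≤ ĉ(a) ≤ c(a) + ε for all a ∈ A, it holds that D_{f,ĉ}(α) ⊆ D_{f,c}(α). -/
open Finset

/-!
A function on a finite set has a positive gap `g` between its maximum and every non-maximal
value, so a point whose value is within `g` of every other value is a maximizer. Raising each
cost by at most `ε` changes `α·f(T) − c(T)` by at most `n·ε`, so a set in the perturbed demand is
within `n·ε` of every set under the original costs; for `n·ε < g` it is in the original demand.
-/

/-- The gap `g` is the least positive difference `u y - u x` (or `1` if there is none). -/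
theorem exists_pos_forall_lt_add_imp_le {β : Type*} [Fintype β] (u : β → ℝ) :
    ∃ g > 0, ∀ x, (∀ y, u y < u x + g) → ∀ y, u y ≤ u x := by
  classical
  set D : Finset ℝ :=
    insert 1 (((univ ×ˢ univ).image fun p : β × β => u p.2 - u p.1).filter (0 < ·))
  have hD : D.Nonempty := insert_nonempty _ _
  have hD_pos : 0 < D.min' hD := by
    rw [lt_min'_iff]
    intro d hd
    rcases mem_insert.mp hd with rfl | hd
    · exact one_pos
    · exact (mem_filter.mp hd).2
  refine ⟨D.min' hD, hD_pos, fun x hx y => ?_⟩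
  by_contra! hlt
  have hmem : u y - u x ∈ D :=
    mem_insert_of_mem (mem_filter.mpr ⟨mem_image.mpr ⟨(x, y), by simp⟩, by linarith⟩)
  linarith [min'_le D _ hmem, hx y]

theorem sum_le_sum_add_card_mul {ι : Type*} [Fintype ι] (s : Finset ι) {c ĉ : ι → ℝ} {ε : ℝ}
    (hε : 0 ≤ ε) (h : ∀ a, ĉ a ≤ c a + ε) :
    ∑ a ∈ s, ĉ a ≤ ∑ a ∈ s, c a + Fintype.card ι * ε :=
  calc ∑ a ∈ s, ĉ a ≤ ∑ a ∈ s, (c a + ε) := sum_le_sum fun a _ => h a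
    _ = ∑ a ∈ s, c a + #s * ε := by rw [sum_add_distrib, sum_const, nsmul_eq_mul]
    _ ≤ ∑ a ∈ s, c a + Fintype.card ι * ε := by
      gcongr
      exact_mod_cast card_le_univ s

theorem demand_perturbation_general (n : ℕ) (f : Finset (Fin n) → ℝ) (c : Fin n → ℝ)
    (α : ℝ) :
    ∃ ε : ℝ, 0 < ε ∧ ∀ chat : Fin n → ℝ,
      (∀ a : Fin n, c a ≤ chat a ∧ chat a ≤ c a + ε) →
      Demand n f chat α ⊆ Demand n f c α := by
  obtain ⟨g, hg, hgap⟩ :=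
    exists_pos_forall_lt_add_imp_le fun T : Finset (Fin n) => α * f T - ∑ a ∈ T, c a
  have hn : (n : ℝ) * (g / (n + 1)) < g := by
    rw [mul_div_assoc', div_lt_iff₀ (by positivity)]
    linarith
  refine ⟨g / (n + 1), by positivity, fun chat hchat S hS => hgap S fun T => ?_⟩
  have hT := sum_le_sum_add_card_mul T (by positivity) fun a => (hchat a).2
  have hS_cost : ∑ a ∈ S, c a ≤ ∑ a ∈ S, chat a := sum_le_sum fun a _ => (hchat a).1
  rw [Fintype.card_fin] at hT
  linarith [hS T]

/-- Small upward perturbations of the costs cannot insert new sets into the demand. -/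
theorem demand_perturbation (n : ℕ) (f : Finset (Fin n) → ℝ) (c : Fin n → ℝ)
    (hf0 : f ∅ = 0) (hmono : ∀ S T : Finset (Fin n), S ⊆ T → f S ≤ f T)
    (hf01 : ∀ S : Finset (Fin n), 0 ≤ f S ∧ f S ≤ 1) (hc : ∀ a : Fin n, 0 < c a)
    (α : ℝ) (hα : 0 < α) :
    ∃ ε : ℝ, 0 < ε ∧ ∀ chat : Fin n → ℝ,
      (∀ a : Fin n, c a ≤ chat a ∧ chat a ≤ c a + ε) →
      Demand n f chat α ⊆ Demand n f c α :=
  demand_perturbation_general n f c α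
end

section
/- For every n ≥ 1, there exist a monotone coverage function f : 2^{{1,…,n}} → [0,1] with f(∅) = 0 and a cost function c with c(a) > 0 for all a such that the critical set has exponential size: |C_{f,c}| = 2^n − 1. -/
open Finset

/-- `f` is a coverage function: there is a finite weighted universe `U` and a map
`g` from actions to subsets of `U` such that `f(S)` is the total weight covered by `S`. -/
def IsCoverage {A : Type*} [DecidableEq A] (f : Finset A → ℝ) : Prop :=
  ∃ (m : ℕ) (w : Fin m → ℝ) (g : A → Finset (Fin m)),
    (∀ j, 0 ≤ w j) ∧ ∀ S : Finset A, f S = ∑ j ∈ S.biUnion g, w j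

namespace CovExp

variable (n : ℕ)

/-- binary value of a subset -/
def mv (S : Finset (Fin n)) : ℕ := ∑ i ∈ S, 2 ^ (i : ℕ)

variable {n}

lemma geomsum (n : ℕ) : ∑ i ∈ Finset.range n, 2 ^ i = 2 ^ n - 1 := by
  induction n with
  | zero => simp
  | succ k ih =>
    rw [Finset.sum_range_succ, ih, pow_succ]
    have : 1 ≤ 2 ^ k := Nat.one_le_two_pow
    omega

lemma mv_lt (S : Finset (Fin n)) : mv n S < 2 ^ n := by
  have h1 : mv n S ≤ ∑ i : Fin n, 2 ^ (i : ℕ) :=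
    Finset.sum_le_sum_of_subset (Finset.subset_univ S)
  have h2 : ∑ i : Fin n, 2 ^ (i : ℕ) = 2 ^ n - 1 := by
    rw [Fin.sum_univ_eq_sum_range]
    exact geomsum n
  have : 1 ≤ 2 ^ n := Nat.one_le_two_pow
  omega

/-- indicator function -/
def chi (S : Finset (Fin n)) : Fin n → Fin 2 := fun i => if i ∈ S then 1 else 0

lemma eqv_chi (S : Finset (Fin n)) : ((finFunctionFinEquiv (chi S) : Fin (2 ^ n)) : ℕ) = mv n S := by
  rw [finFunctionFinEquiv_apply]
  rw [mv, ← Finset.sum_filter_add_sum_filter_not Finset.univ (fun i => i ∈ S)]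
  have h1 : ∀ i ∈ Finset.univ.filter (fun i => i ∈ S), ((chi S i : ℕ)) * 2 ^ (i : ℕ) = 2 ^ (i:ℕ) := by
    intro i hi; simp only [Finset.mem_filter] at hi; simp [chi, hi.2]
  have h2 : ∀ i ∈ Finset.univ.filter (fun i => ¬ i ∈ S), ((chi S i : ℕ)) * 2 ^ (i : ℕ) = 0 := by
    intro i hi; simp only [Finset.mem_filter] at hi; simp [chi, hi.2]
  rw [Finset.sum_congr rfl h1, Finset.sum_congr rfl h2]
  simp

lemma mv_inj {S T : Finset (Fin n)} (h : mv n S = mv n T) : S = T := by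
  have h1 : chi S = chi T := by
    have : (finFunctionFinEquiv (chi S) : Fin (2^n)) = finFunctionFinEquiv (chi T) := by
      apply Fin.ext; rw [eqv_chi, eqv_chi, h]
    exact finFunctionFinEquiv.injective this
  ext i
  have := congrFun h1 i
  simp only [chi] at this
  by_cases hS : i ∈ S <;> by_cases hT : i ∈ T <;> simp_all

/-- decode -/
def Dset (j : Fin (2 ^ n)) : Finset (Fin n) :=
  Finset.univ.filter (fun i => finFunctionFinEquiv.symm j i = 1)

lemma chi_Dset (j : Fin (2 ^ n)) : chi (Dset j) = finFunctionFinEquiv.symm j := by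
  funext i
  simp only [chi, Dset, Finset.mem_filter, Finset.mem_univ, true_and]
  by_cases h : finFunctionFinEquiv.symm j i = 1
  · simp [h]
  · simp only [h, if_false]
    omega

lemma mv_Dset (j : Fin (2 ^ n)) : mv n (Dset j) = (j : ℕ) := by
  rw [← eqv_chi, chi_Dset, Equiv.apply_symm_apply]

lemma Dset_surj (S : Finset (Fin n)) : Dset (⟨mv n S, mv_lt S⟩ : Fin (2^n)) = S := by
  apply mv_inj; rw [mv_Dset]


noncomputable def kap (n : ℕ) : ℝ := (2:ℝ)⁻¹ ^ (2 ^ n + 1)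

noncomputable def fF (n : ℕ) (S : Finset (Fin n)) : ℝ := 1 - (2:ℝ)⁻¹ ^ (mv n S)

noncomputable def cF (n : ℕ) (a : Fin n) : ℝ := 2 ^ (a:ℕ) * kap n

noncomputable def U (n : ℕ) (α : ℝ) (k : ℕ) : ℝ := α * (1 - (2:ℝ)⁻¹ ^ k) - k * kap n

noncomputable def B (n : ℕ) (k : ℕ) : ℝ := 2 ^ k * kap n

lemma kap_pos : 0 < kap n := by unfold kap; positivity

lemma B_pos (k : ℕ) : 0 < B n k :=
  mul_pos (pow_pos two_pos k) (kap_pos (n := n))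

lemma B_mono {i k : ℕ} (h : i ≤ k) : B n i ≤ B n k := by
  have hk := kap_pos (n := n)
  exact mul_le_mul_of_nonneg_right (pow_le_pow_right₀ one_le_two h) hk.le

lemma B_strictmono {i k : ℕ} (h : i < k) : B n i < B n k := by
  have hk := kap_pos (n := n)
  exact mul_lt_mul_of_pos_right (pow_lt_pow_right₀ one_lt_two h) hk

lemma cost_sum (S : Finset (Fin n)) : ∑ a ∈ S, cF n a = (mv n S : ℝ) * kap n := by
  rw [mv]
  push_cast
  rw [Finset.sum_mul]
  rfl

lemma util_eq (α : ℝ) (S : Finset (Fin n)) :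
    α * fF n S - ∑ a ∈ S, cF n a = U n α (mv n S) := by
  rw [cost_sum]; rfl

lemma pow_two_inv_mul (i : ℕ) : (2:ℝ) ^ i * (2:ℝ)⁻¹ ^ i = 1 := by
  rw [← mul_pow]; norm_num

lemma U_step (α : ℝ) (j : ℕ) :
    U n α (j+1) - U n α j = α * (2:ℝ)⁻¹ ^ (j+1) - kap n := by
  simp only [U, pow_succ]
  push_cast
  ring

lemma step_nonneg {α : ℝ} {i : ℕ} (h : B n i ≤ α) : 0 ≤ α * (2:ℝ)⁻¹ ^ i - kap n := by
  have h2 : (2:ℝ)^i * (2:ℝ)⁻¹^i = 1 := pow_two_inv_mul i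
  have := mul_le_mul_of_nonneg_right h (by positivity : (0:ℝ) ≤ (2:ℝ)⁻¹ ^ i)
  rw [B] at this
  nlinarith [kap_pos (n := n)]

lemma step_neg {α : ℝ} {k i : ℕ} (hα : 0 ≤ α) (h : α < B n (k+1)) (hi : k + 1 ≤ i) :
    α * (2:ℝ)⁻¹ ^ i - kap n < 0 := by
  have h1 : α * (2:ℝ)⁻¹ ^ i ≤ α * (2:ℝ)⁻¹ ^ (k+1) :=
    mul_le_mul_of_nonneg_left (pow_le_pow_of_le_one (by norm_num) (by norm_num) hi) hα
  have h2 : α * (2:ℝ)⁻¹ ^ (k+1) < B n (k+1) * (2:ℝ)⁻¹ ^ (k+1) :=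
    mul_lt_mul_of_pos_right h (by positivity)
  have h3 : (2:ℝ)^(k+1) * (2:ℝ)⁻¹^(k+1) = 1 := pow_two_inv_mul (k+1)
  rw [B] at h2
  nlinarith [kap_pos (n := n)]

lemma U_le {α : ℝ} {j k : ℕ} (hjk : j ≤ k) (h : ∀ i, j < i → i ≤ k → B n i ≤ α) :
    U n α j ≤ U n α k := by
  induction k with
  | zero => simp [Nat.le_zero.mp hjk]
  | succ m ih =>
    rcases Nat.lt_or_ge j (m+1) with hj | hj
    · have h1 : U n α j ≤ U n α m := ih (by omega) (fun i hi1 hi2 => h i hi1 (by omega))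
      have h2 : 0 ≤ U n α (m+1) - U n α m := by
        rw [U_step]; exact step_nonneg (h (m+1) (by omega) le_rfl)
      linarith
    · have : j = m + 1 := by omega
      rw [this]

lemma U_lt {α : ℝ} {j k : ℕ} (hα : 0 ≤ α) (hjk : k < j) (h : α < B n (k+1)) :
    U n α j < U n α k := by
  induction j with
  | zero => omega
  | succ m ih =>
    have hstep : U n α (m+1) - U n α m < 0 := by
      rw [U_step]; exact step_neg hα h (by omega)
    rcases Nat.lt_or_ge k m with hk | hk
    · have := ih hk; linarith
    · have : k = m := by omega
      rw [this] at *; linarith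

lemma vfc_eq {α : ℝ} (hα : 0 ≤ α) {k : ℕ} (hk : k < 2^n)
    (h1 : k = 0 ∨ B n k ≤ α) (h2 : k = 2^n - 1 ∨ α < B n (k+1)) :
    Vfc n (fF n) (cF n) α = 1 - (2:ℝ)⁻¹ ^ k := by
  set Sk : Finset (Fin n) := Dset (⟨k, hk⟩ : Fin (2^n)) with hSk
  have hmvSk : mv n Sk = k := mv_Dset _
  have h1' : ∀ i, 1 ≤ i → i ≤ k → B n i ≤ α := by
    intro i hi1 hi2
    rcases h1 with h1 | h1
    · omega
    · exact le_trans (B_mono hi2) h1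
  -- any set with mv > k has strictly smaller utility; mv ≤ k has ≤ utility of k
  have key : ∀ j, j < 2^n → U n α j ≤ U n α k ∧ (k < j → U n α j < U n α k) := by
    intro j hj
    rcases Nat.lt_or_ge k j with hlt | hle
    · have hstrict : U n α j < U n α k := by
        rcases h2 with h2 | h2
        · omega
        · exact U_lt hα hlt h2
      exact ⟨hstrict.le, fun _ => hstrict⟩
    · refine ⟨U_le hle (fun i hi1 hi2 => h1' i (by omega) hi2), fun hc => by omega⟩
  have hSkDem : Sk ∈ Demand n (fF n) (cF n) α := by
    intro T
    rw [util_eq, util_eq, hmvSk]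
    exact (key (mv n T) (mv_lt T)).1
  have hub : ∀ x ∈ fF n '' Demand n (fF n) (cF n) α, x ≤ 1 - (2:ℝ)⁻¹ ^ k := by
    rintro x ⟨S, hS, rfl⟩
    have hge : U n α k ≤ U n α (mv n S) := by
      have := hS Sk
      rw [util_eq, util_eq, hmvSk] at this
      exact this
    have hmle : mv n S ≤ k := by
      by_contra hc
      push_neg at hc
      exact absurd hge (not_le.mpr ((key (mv n S) (mv_lt S)).2 hc))
    have : (2:ℝ)⁻¹ ^ k ≤ (2:ℝ)⁻¹ ^ (mv n S) :=
      pow_le_pow_of_le_one (by norm_num) (by norm_num) hmle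
    simp only [fF]
    linarith
  have hmem : (1 - (2:ℝ)⁻¹ ^ k) ∈ fF n '' Demand n (fF n) (cF n) α :=
    ⟨Sk, hSkDem, by rw [fF, hmvSk]⟩
  exact IsGreatest.csSup_eq ⟨hmem, hub⟩


lemma B_le_one {k : ℕ} (hk : k ≤ 2 ^ n - 1) : B n k ≤ 1 := by
  have h1 : B n k ≤ B n (2 ^ n - 1) := B_mono hk
  have hN : 1 ≤ 2 ^ n := Nat.one_le_two_pow
  have he : 2 ^ n + 1 = (2 ^ n - 1) + 2 := by omega
  have h2 : B n (2 ^ n - 1) = (2:ℝ)⁻¹ ^ 2 := by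
    rw [B, kap, he, pow_add]
    rw [← mul_assoc, pow_two_inv_mul]
    ring
  rw [h2] at h1
  norm_num at h1
  linarith

open Classical in
lemma crit_eq (hn : 1 ≤ n) :
    Critical n (fF n) (cF n) = B n '' (Set.Icc 1 (2 ^ n - 1)) := by
  have hN : 1 ≤ 2 ^ n := Nat.one_le_two_pow
  have hN2 : 2 ≤ 2 ^ n := by
    calc 2 = 2 ^ 1 := (pow_one 2).symm
    _ ≤ 2 ^ n := Nat.pow_le_pow_right (by norm_num) hn
  ext α
  constructor
  · rintro ⟨hα0, hα1, hcrit⟩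
    by_cases hsmall : α < B n 1
    · exfalso
      apply hcrit α hα0 le_rfl
      rw [sub_self]
      rw [vfc_eq le_rfl (by omega) (Or.inl rfl) (Or.inr (by rw [zero_add]; exact B_pos 1)),
        vfc_eq hα0.le (by omega) (Or.inl rfl) (Or.inr (by rw [zero_add]; exact hsmall))]
    · push_neg at hsmall
      set k := Nat.findGreatest (fun i => B n i ≤ α) (2 ^ n - 1) with hkdef
      have hk1 : 1 ≤ k := Nat.le_findGreatest (by omega) hsmall
      have hkle : k ≤ 2 ^ n - 1 := Nat.findGreatest_le _
      have hBk : B n k ≤ α := by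
        rw [hkdef]
        exact Nat.findGreatest_spec (P := fun i => B n i ≤ α) (m := 1) (Nat.le_sub_one_of_lt hN2) hsmall
      have h2 : k = 2 ^ n - 1 ∨ α < B n (k + 1) := by
        rcases Nat.lt_or_ge k (2 ^ n - 1) with hlt | hge
        · right
          have hgt : Nat.findGreatest (fun i => B n i ≤ α) (2 ^ n - 1) < k + 1 :=
            Nat.lt_succ_self k
          have := Nat.findGreatest_is_greatest hgt (by omega)
          exact lt_of_not_ge this
        · left; omega
      have hVα : Vfc n (fF n) (cF n) α = 1 - (2:ℝ)⁻¹ ^ k :=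
        vfc_eq hα0.le (by omega) (Or.inr hBk) h2
      have : α = B n k := by
        by_contra hne
        have hlt : B n k < α := lt_of_le_of_ne hBk (Ne.symm hne)
        apply hcrit (α - B n k) (by linarith) (by have := (B_pos (n := n) k); linarith)
        have : α - (α - B n k) = B n k := by ring
        rw [this, hVα,
          vfc_eq (B_pos k).le (by omega) (Or.inr le_rfl) (Or.inr (B_strictmono (by omega)))]
      exact ⟨k, ⟨hk1, hkle⟩, this.symm⟩
  · rintro ⟨k, ⟨hk1, hkle⟩, rfl⟩
    have hklt : k < 2 ^ n := by omega
    refine ⟨B_pos k, B_le_one hkle, ?_⟩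
    intro ε hε0 hεle
    rw [vfc_eq (B_pos k).le hklt (Or.inr le_rfl) (Or.inr (B_strictmono (by omega)))]
    set β := B n k - ε with hβdef
    have hβ0 : 0 ≤ β := by simp [hβdef]; linarith
    have hβlt : β < B n k := by simp [hβdef]; linarith
    set j := Nat.findGreatest (fun i => B n i ≤ β) (k - 1) with hjdef
    have hjle : j ≤ k - 1 := Nat.findGreatest_le _
    have hj1 : j = 0 ∨ B n j ≤ β := by
      by_cases h0 : j = 0
      · exact Or.inl h0
      · exact Or.inr ((Nat.findGreatest_eq_iff.1 hjdef.symm).2.1 h0)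
    have hj2 : β < B n (j + 1) := by
      rcases Nat.lt_or_ge j (k - 1) with hlt | hge
      · have hgt : Nat.findGreatest (fun i => B n i ≤ β) (k - 1) < j + 1 :=
          Nat.lt_succ_self j
        have := Nat.findGreatest_is_greatest hgt (by omega)
        exact lt_of_not_ge this
      · have : j + 1 = k := by omega
        rw [this]; exact hβlt
    rw [vfc_eq hβ0 (by omega) hj1 (Or.inr hj2)]
    have hjk : j < k := by omega
    have : (2:ℝ)⁻¹ ^ k < (2:ℝ)⁻¹ ^ j :=
      pow_lt_pow_right_of_lt_one₀ (by norm_num) (by norm_num) hjk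
    intro hcon
    have : (2:ℝ)⁻¹ ^ j = (2:ℝ)⁻¹ ^ k := by linarith
    linarith

lemma crit_finite (hn : 1 ≤ n) : (Critical n (fF n) (cF n)).Finite := by
  rw [crit_eq hn]
  exact (Set.finite_Icc _ _).image _

lemma crit_ncard (hn : 1 ≤ n) : (Critical n (fF n) (cF n)).ncard = 2 ^ n - 1 := by
  rw [crit_eq hn]
  have hinj : Function.Injective (B n) := fun a b hab => by
    rcases lt_trichotomy a b with h | h | h
    · exact absurd hab (ne_of_lt (B_strictmono h))
    · exact h
    · exact absurd hab.symm (ne_of_lt (B_strictmono h))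
  rw [Set.ncard_image_of_injective _ hinj, ← Finset.coe_Icc, Set.ncard_coe_finset,
    Nat.card_Icc]
  omega


noncomputable def q (i : Fin n) : ℝ := (2:ℝ)⁻¹ ^ (2 ^ (i:ℕ))

noncomputable def wT (T : Finset (Fin n)) : ℝ :=
  (∏ i ∈ T, (1 - q i)) * ∏ i ∈ Finset.univ \ T, q i

lemma q_nonneg (i : Fin n) : 0 ≤ q i := by unfold q; positivity

lemma q_le_one (i : Fin n) : q i ≤ 1 := pow_le_one₀ (by norm_num) (by norm_num)

lemma wT_nonneg (T : Finset (Fin n)) : 0 ≤ wT T := by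
  apply mul_nonneg
  · exact Finset.prod_nonneg fun i _ => by linarith [q_le_one i]
  · exact Finset.prod_nonneg fun i _ => q_nonneg i

/-- transfer a sum over bit-indices to a sum over subsets -/
lemma sum_transfer (h : Finset (Fin n) → ℝ) (G : Finset (Finset (Fin n))) :
    ∑ j ∈ Finset.univ.filter (fun j : Fin (2^n) => Dset j ∈ G), h (Dset j) =
      ∑ T ∈ G, h T := by
  apply Finset.sum_nbij' (i := fun j => Dset j)
    (j := fun T => (⟨mv n T, mv_lt T⟩ : Fin (2^n)))
  · intro a ha
    simp only [Finset.mem_filter] at ha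
    exact ha.2
  · intro T hT
    simp only [Finset.mem_filter, Finset.mem_univ, true_and]
    rw [Dset_surj]
    exact hT
  · intro a ha
    apply Fin.ext
    simp [mv_Dset]
  · intro T hT
    exact Dset_surj T
  · intro a ha
    rfl

lemma sum_wT_total : ∑ T ∈ (Finset.univ : Finset (Finset (Fin n))), wT T = 1 := by
  rw [← Finset.powerset_univ]
  have := Finset.prod_add (fun i : Fin n => 1 - q i) q Finset.univ
  simp only [sub_add_cancel, Finset.prod_const_one] at this
  simp only [wT]
  exact this.symm

lemma sum_wT_disj (S : Finset (Fin n)) :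
    ∑ T ∈ Sᶜ.powerset, wT T = (2:ℝ)⁻¹ ^ (mv n S) := by
  have key : ∀ T ∈ Sᶜ.powerset, wT T =
      (∏ i ∈ S, q i) * ((∏ i ∈ T, (1 - q i)) * ∏ i ∈ Sᶜ \ T, q i) := by
    intro T hT
    rw [Finset.mem_powerset] at hT
    have hset : Finset.univ \ T = (Sᶜ \ T) ∪ S := by
      ext i
      simp only [Finset.mem_sdiff, Finset.mem_univ, true_and, Finset.mem_union,
        Finset.mem_compl]
      constructor
      · intro hi
        by_cases hiS : i ∈ S
        · exact Or.inr hiS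
        · exact Or.inl ⟨hiS, hi⟩
      · rintro (⟨-, hi⟩ | hiS)
        · exact hi
        · intro hiT
          exact (Finset.mem_compl.mp (hT hiT)) hiS
    have hdisj : Disjoint (Sᶜ \ T) S := by
      apply Finset.disjoint_left.mpr
      intro i hi
      simp only [Finset.mem_sdiff, Finset.mem_compl] at hi
      exact hi.1
    rw [wT, hset, Finset.prod_union hdisj]
    ring
  rw [Finset.sum_congr rfl key, ← Finset.mul_sum]
  have := Finset.prod_add (fun i : Fin n => 1 - q i) q Sᶜ
  simp only [sub_add_cancel, Finset.prod_const_one] at this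
  rw [← this, mul_one, mv, ← Finset.prod_pow_eq_pow_sum]
  rfl

lemma fF_coverage : IsCoverage (fF n) := by
  classical
  refine ⟨2 ^ n, fun j => wT (Dset j), fun i => Finset.univ.filter (fun j => i ∈ Dset j),
    fun j => wT_nonneg _, fun S => ?_⟩
  have hbi : S.biUnion (fun i => Finset.univ.filter (fun j => i ∈ Dset j)) =
      Finset.univ.filter (fun j : Fin (2^n) =>
        Dset j ∈ Finset.univ.filter (fun T => ∃ i ∈ S, i ∈ T)) := by
    ext j
    simp only [Finset.mem_biUnion, Finset.mem_filter, Finset.mem_univ, true_and]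
  rw [hbi, sum_transfer]
  have hsplit := Finset.sum_filter_add_sum_filter_not
    (Finset.univ : Finset (Finset (Fin n))) (fun T => ∃ i ∈ S, i ∈ T) wT
  have hnot : Finset.univ.filter (fun T : Finset (Fin n) => ¬ ∃ i ∈ S, i ∈ T) =
      Sᶜ.powerset := by
    ext T
    simp only [Finset.mem_filter, Finset.mem_univ, true_and, Finset.mem_powerset,
      Finset.subset_iff, Finset.mem_compl]
    push_neg
    constructor
    · intro h i hiT hiS
      exact h i hiS hiT
    · intro h i hiS hiT
      exact h hiT hiS
  rw [hnot, sum_wT_disj, sum_wT_total] at hsplit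
  rw [fF]
  linarith

lemma fF_empty : fF n ∅ = 0 := by simp [fF, mv]

lemma fF_mono {S T : Finset (Fin n)} (h : S ⊆ T) : fF n S ≤ fF n T := by
  have hm : mv n S ≤ mv n T := Finset.sum_le_sum_of_subset h
  have : (2:ℝ)⁻¹ ^ (mv n T) ≤ (2:ℝ)⁻¹ ^ (mv n S) :=
    pow_le_pow_of_le_one (by norm_num) (by norm_num) hm
  simp only [fF]
  linarith

lemma fF_bounds (S : Finset (Fin n)) : 0 ≤ fF n S ∧ fF n S ≤ 1 := by
  have h1 : (2:ℝ)⁻¹ ^ (mv n S) ≤ 1 := pow_le_one₀ (by norm_num) (by norm_num)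
  have h2 : (0:ℝ) ≤ (2:ℝ)⁻¹ ^ (mv n S) := by positivity
  constructor <;> (simp only [fF]; linarith)

lemma cF_pos (a : Fin n) : 0 < cF n a :=
  mul_pos (pow_pos two_pos _) (kap_pos (n := n))

end CovExp

/-- There is a monotone coverage success probability function (with values in `[0,1]`)
and a positive cost function whose critical set has size exactly `2^n − 1`. -/
theorem exists_coverage_exponential_critical_set (n : ℕ) (hn : 1 ≤ n) :
    ∃ (f : Finset (Fin n) → ℝ) (c : Fin n → ℝ),
      IsCoverage f ∧ f ∅ = 0 ∧ (∀ S T : Finset (Fin n), S ⊆ T → f S ≤ f T) ∧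
      (∀ S : Finset (Fin n), 0 ≤ f S ∧ f S ≤ 1) ∧ (∀ a : Fin n, 0 < c a) ∧
      (Critical n f c).Finite ∧ (Critical n f c).ncard = 2 ^ n - 1 :=
  ⟨CovExp.fF n, CovExp.cF n, CovExp.fF_coverage, CovExp.fF_empty,
    fun _ _ h => CovExp.fF_mono h, CovExp.fF_bounds, CovExp.cF_pos,
    CovExp.crit_finite hn, CovExp.crit_ncard hn⟩
end

section
/- Let x_1, …, x_n and Z be positive integers with x_i < Z for every i and Σ_{i=1}^n x_i > Z. Define the budget additive success probability function f(S) = min(Z, Σ_{i∈S} x_i) on A = {1,…,n} and costs c(i) = x_i / Z². Then the optimal principal utility satisfies sup_{α ∈ [0,1]} (1 − α)·V_{f,c}(α) = (1 − 1/Z²)·Z if there exists S ⊆ {1,…,n} with Σ_{i∈S} x_i = Z, and sup_{α ∈ [0,1]} (1 − α)·V_{f,c}(α) < (1 − 1/Z²)·Z otherwise. -/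
open Finset

set_option maxHeartbeats 1600000 in
/-- The subset-sum reduction: with `f(S) = min(Z, Σ_{i∈S} x_i)` and `c(i) = x_i / Z²`,
the optimal principal utility equals `(1 − 1/Z²)·Z` iff some subset sums to exactly `Z`
(and is strictly smaller otherwise). -/
theorem subset_sum_reduction (n : ℕ) (x : Fin n → ℕ) (Z : ℕ)
    (hZ : 0 < Z) (hx : ∀ i, 0 < x i) (hxZ : ∀ i, x i < Z)
    (hsum : Z < ∑ i : Fin n, x i) :
    (let f : Finset (Fin n) → ℝ := fun S => min (Z : ℝ) (∑ i ∈ S, (x i : ℝ));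
     let c : Fin n → ℝ := fun i => (x i : ℝ) / (Z : ℝ) ^ 2;
     let optUtil : ℝ := sSup ((fun α => (1 - α) * Vfc n f c α) '' Set.Icc (0 : ℝ) 1);
     ((∃ S : Finset (Fin n), ∑ i ∈ S, x i = Z) →
        optUtil = (1 - 1 / (Z : ℝ) ^ 2) * Z) ∧
     ((¬ ∃ S : Finset (Fin n), ∑ i ∈ S, x i = Z) →
        optUtil < (1 - 1 / (Z : ℝ) ^ 2) * Z)) := by

  intro f c optUtil
  have hn : n ≠ 0 := by
    rintro rfl
    simp at hsum
  have i0 : Fin n := ⟨0, Nat.pos_of_ne_zero hn⟩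
  have hZ2 : 2 ≤ Z := by have h1 := hx i0; have h2 := hxZ i0; omega
  have hZR : (0:ℝ) < Z := by exact_mod_cast hZ
  have hZ1R : (1:ℝ) < Z := by exact_mod_cast hZ2
  have hZsq : (0:ℝ) < (Z:ℝ)^2 := by positivity
  set α₀ : ℝ := 1 / (Z:ℝ)^2 with hα₀
  have hα₀pos : 0 < α₀ := by positivity
  have hα₀le1 : α₀ ≤ 1 := by rw [hα₀, div_le_one hZsq]; nlinarith
  have hf0 : ∀ S : Finset (Fin n), 0 ≤ f S := fun S =>
    le_min hZR.le (Finset.sum_nonneg fun i _ => by positivity)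
  have hfZ : ∀ S : Finset (Fin n), f S ≤ Z := fun S => min_le_left _ _
  have hfs : ∀ S : Finset (Fin n), f S ≤ ∑ i ∈ S, (x i : ℝ) := fun S => min_le_right _ _
  have csum : ∀ S : Finset (Fin n), ∑ a ∈ S, c a = (∑ a ∈ S, (x a : ℝ)) / (Z:ℝ)^2 := by
    intro S; simp only [c]; rw [Finset.sum_div]
  have hVle : ∀ (α b : ℝ), 0 ≤ b → (∀ S ∈ Demand n f c α, f S ≤ b) → Vfc n f c α ≤ b := by
    intro α b hb h
    apply Real.sSup_le _ hb
    rintro y ⟨S, hS, rfl⟩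
    exact h S hS
  have hVnn : ∀ α : ℝ, 0 ≤ Vfc n f c α := by
    intro α
    apply Real.sSup_nonneg
    rintro y ⟨S, _, rfl⟩
    exact hf0 S
  have hVZ : ∀ α : ℝ, Vfc n f c α ≤ Z := fun α => hVle α Z hZR.le (fun S _ => hfZ S)
  -- uniform upper bound by (1 - α₀) * Z
  have hUB : ∀ α ∈ Set.Icc (0:ℝ) 1, (1 - α) * Vfc n f c α ≤ (1 - α₀) * Z := by
    rintro α ⟨hα0, hα1⟩
    rcases lt_or_ge α α₀ with h | h
    · have hV0 : Vfc n f c α ≤ 0 := by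
        apply hVle α 0 le_rfl
        intro S hS
        have hcomp := hS ∅
        rw [csum, csum] at hcomp
        simp only [Finset.sum_empty, zero_div, sub_zero] at hcomp
        have hfe : f ∅ = 0 := by
          show min (Z:ℝ) (∑ i ∈ (∅ : Finset (Fin n)), (x i : ℝ)) = 0
          simp [min_eq_right hZR.le]
        rw [hfe, mul_zero] at hcomp
        have hS1 := hfs S
        have hSnn : (0:ℝ) ≤ ∑ i ∈ S, (x i : ℝ) := Finset.sum_nonneg fun i _ => by positivity
        by_contra hgt
        push_neg at hgt
        have hspos : (0:ℝ) < ∑ i ∈ S, (x i : ℝ) := lt_of_lt_of_le hgt hS1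
        have hα' : α < 1 / (Z:ℝ)^2 := h
        rw [lt_div_iff₀ hZsq] at hα'
        have h2 : (∑ i ∈ S, (x i : ℝ)) / (Z:ℝ)^2 ≤ α * (∑ i ∈ S, (x i : ℝ)) := by
          nlinarith
        rw [div_le_iff₀ hZsq] at h2
        nlinarith
      nlinarith [mul_nonpos_of_nonneg_of_nonpos (by linarith : (0:ℝ) ≤ 1 - α) hV0]
    · nlinarith [hVZ α, hVnn α,
        mul_nonneg (by linarith : (0:ℝ) ≤ 1 - α) (sub_nonneg.2 (hVZ α)),
        mul_nonneg (sub_nonneg.2 h) hZR.le]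
  have hUBnn : (0:ℝ) ≤ (1 - α₀) * Z := mul_nonneg (by linarith) hZR.le
  have hBdd : BddAbove ((fun α => (1 - α) * Vfc n f c α) '' Set.Icc (0:ℝ) 1) := by
    refine ⟨(1 - α₀) * Z, ?_⟩
    rintro y ⟨α, hα, rfl⟩
    exact hUB α hα
  constructor
  · rintro ⟨S₀, hS₀⟩
    have hS₀R : (∑ i ∈ S₀, (x i : ℝ)) = Z := by
      rw [← Nat.cast_sum, hS₀]
    have hfS₀ : f S₀ = Z := by
      show min (Z:ℝ) (∑ i ∈ S₀, (x i : ℝ)) = Z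
      rw [hS₀R, min_self]
    have hS₀dem : S₀ ∈ Demand n f c α₀ := by
      intro T
      rw [csum, csum, hS₀R, hfS₀, hα₀]
      have hfT := hfs T
      have h1 : 1 / (Z:ℝ)^2 * f T - (∑ i ∈ T, (x i : ℝ)) / (Z:ℝ)^2
          = (f T - ∑ i ∈ T, (x i : ℝ)) / (Z:ℝ)^2 := by ring
      have h2 : 1 / (Z:ℝ)^2 * (Z:ℝ) - (Z:ℝ) / (Z:ℝ)^2 = 0 := by ring
      rw [h1, h2]
      exact div_nonpos_of_nonpos_of_nonneg (by linarith) hZsq.le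
    have hVα₀ : Vfc n f c α₀ = Z := by
      refine le_antisymm (hVZ α₀) ?_
      have : (Z:ℝ) ∈ f '' Demand n f c α₀ := ⟨S₀, hS₀dem, hfS₀⟩
      refine le_csSup ⟨Z, ?_⟩ this
      rintro y ⟨S, _, rfl⟩
      exact hfZ S
    refine le_antisymm (Real.sSup_le ?_ hUBnn) ?_
    · rintro y ⟨α, hα, rfl⟩
      exact hUB α hα
    · refine le_csSup hBdd ⟨α₀, ⟨hα₀pos.le, hα₀le1⟩, ?_⟩
      show (1 - α₀) * Vfc n f c α₀ = (1 - α₀) * (Z:ℝ)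
      rw [hVα₀]
  · intro hne
    classical
    set F := (Finset.univ : Finset (Finset (Fin n))).filter (fun S => ∑ i ∈ S, x i ≤ Z) with hF
    have hF0 : (∅ : Finset (Fin n)) ∈ F := by simp [hF]
    obtain ⟨T₀, hT₀F, hT₀⟩ := Finset.exists_mem_eq_sup F ⟨∅, hF0⟩ (fun S => ∑ i ∈ S, x i)
    set m := F.sup (fun S => ∑ i ∈ S, x i) with hm
    have hT₀le : ∑ i ∈ T₀, x i ≤ Z := (Finset.mem_filter.1 hT₀F).2
    have hmZ : m < Z := by
      rcases lt_or_eq_of_le (hT₀ ▸ hT₀le : m ≤ Z) with h | h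
      · exact h
      · exact absurd ⟨T₀, by omega⟩ hne
    have hmax : ∀ S : Finset (Fin n), (∑ i ∈ S, x i ≤ Z) → ∑ i ∈ S, x i ≤ m := by
      intro S h
      refine Finset.le_sup (f := fun S => ∑ i ∈ S, x i) ?_
      rw [hF, Finset.mem_filter]
      exact ⟨Finset.mem_univ S, h⟩
    have hmR : (m:ℝ) < Z := by exact_mod_cast hmZ
    have hmRnn : (0:ℝ) ≤ m := Nat.cast_nonneg m
    have hden : (0:ℝ) < ((Z:ℝ) - m) * (Z:ℝ)^2 := mul_pos (by linarith) hZsq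
    set α₁ : ℝ := ((Z:ℝ) + 1 - m) / (((Z:ℝ) - m) * (Z:ℝ)^2) with hα₁
    have hα₁gt : α₀ < α₁ := by
      rw [hα₀, hα₁, div_lt_div_iff₀ hZsq hden]
      nlinarith
    have hT₀R : (∑ i ∈ T₀, (x i : ℝ)) = m := by
      rw [← Nat.cast_sum, ← hT₀]
    have hfT₀ : f T₀ = m := by
      show min (Z:ℝ) (∑ i ∈ T₀, (x i : ℝ)) = m
      rw [hT₀R]
      exact min_eq_right hmR.le
    clear_value m
    clear hm hF hF0
    set B : ℝ := max (m:ℝ) ((1 - α₁) * Z) with hB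
    have hUB2 : ∀ α ∈ Set.Icc (0:ℝ) 1, (1 - α) * Vfc n f c α ≤ B := by
      rintro α ⟨hα0, hα1⟩
      rcases lt_or_ge α α₁ with h | h
      · have hV : Vfc n f c α ≤ m := by
          apply hVle α m hmRnn
          intro S hS
          rcases le_or_gt (∑ i ∈ S, x i) Z with h' | h'
          · refine le_trans (hfs S) ?_
            exact_mod_cast hmax S h'
          · exfalso
            have hsSR : (Z:ℝ) + 1 ≤ ∑ i ∈ S, (x i : ℝ) := by
              rw [← Nat.cast_sum]
              exact_mod_cast Nat.succ_le_of_lt h'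
            have hfS : f S = Z := by
              show min (Z:ℝ) (∑ i ∈ S, (x i : ℝ)) = Z
              exact min_eq_left (by linarith)
            have hcomp := hS T₀
            rw [csum, csum, hfS, hfT₀, hT₀R] at hcomp
            set t : ℝ := ∑ i ∈ S, (x i : ℝ) with ht
            have hcomp2 : (α * (m:ℝ) - (m:ℝ) / (Z:ℝ)^2) * (Z:ℝ)^2
                ≤ (α * (Z:ℝ) - t / (Z:ℝ)^2) * (Z:ℝ)^2 :=
              mul_le_mul_of_nonneg_right hcomp hZsq.le
            have hd1 : (m:ℝ) / (Z:ℝ)^2 * (Z:ℝ)^2 = m := div_mul_cancel₀ _ (ne_of_gt hZsq)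
            have hd2 : t / (Z:ℝ)^2 * (Z:ℝ)^2 = t := div_mul_cancel₀ _ (ne_of_gt hZsq)
            rw [sub_mul, sub_mul, hd1, hd2] at hcomp2
            have : α₁ ≤ α := by
              rw [hα₁, div_le_iff₀ hden]
              nlinarith [hcomp2, hsSR]
            linarith
        refine le_trans ?_ (le_max_left _ _)
        nlinarith [mul_le_mul_of_nonneg_left hV (by linarith : (0:ℝ) ≤ 1 - α),
          hVnn α]
      · refine le_trans ?_ (le_max_right _ _)
        nlinarith [hVZ α, hVnn α,
          mul_nonneg (by linarith : (0:ℝ) ≤ 1 - α) (sub_nonneg.2 (hVZ α)),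
          mul_nonneg (sub_nonneg.2 h) hZR.le]
    have hBnn : (0:ℝ) ≤ B := le_trans hmRnn (le_max_left _ _)
    have h1 : (m:ℝ) < (1 - α₀) * Z := by
      have hmle : (m:ℝ) ≤ (Z:ℝ) - 1 := by
        have : m + 1 ≤ Z := hmZ
        have := (Nat.cast_le (α := ℝ)).2 this
        push_cast at this
        linarith
      have hexp : (1 - α₀) * Z = (Z:ℝ) - 1 / Z := by
        rw [hα₀]; field_simp
      rw [hexp]
      have : 1 / (Z:ℝ) < 1 := by rw [div_lt_one hZR]; linarith
      linarith
    have h2 : (1 - α₁) * Z < (1 - α₀) * Z := by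
      nlinarith [mul_pos (sub_pos.2 hα₁gt) hZR]
    calc optUtil ≤ B := by
          apply Real.sSup_le _ hBnn
          rintro y ⟨α, hα, rfl⟩
          exact hUB2 α hα
      _ < (1 - α₀) * Z := max_lt h1 h2
end

section
/- Linear contracts are max-min optimal: for every expected-reward function R, cost function c, and contract t, there exists α ∈ [0,1] such that the worst-case principal utility of the linear contract with parameter α is at least that of t, i.e., U_min(t_α) ≥ U_min(t), where t_α(x) = α·x. -/
/-!
Against a contract `t`, nature can choose every `D_S` supported on `{0, r}` with `r` above all
rewards. Then every payment rule is seen by the agent and the principal only through the affine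
function through `(0, t 0)` and `(r, t r)`: `t` behaves like the linear contract of slope
`β = (t r - t 0) / r` plus a fixed transfer `t 0 ≥ 0`. For `β ∈ [0, 1]` the agent's choice under
`t` is also optimal for the agent under `t_β` against any compatible `D`, so the tie-breaking rule
gives the principal at least `(1 - β) R(S) ≥ (1 - β) R(S) - t 0` there. For `β ∉ [0, 1]` the
principal gets at most `0` from `t`, while every linear contract with `α ≤ 1` guarantees `0`.
-/

open Finset

/-- A finitely supported probability distribution over nonnegative rewards. -/
structure FinDist where
  m : ℕ
  val : Fin m → ℝ
  prob : Fin m → ℝ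
  val_nonneg : ∀ i, 0 ≤ val i
  prob_nonneg : ∀ i, 0 ≤ prob i
  prob_sum : ∑ i, prob i = 1

/-- Expectation of `g` of the reward under the distribution `D`. -/
noncomputable def FinDist.exp (D : FinDist) (g : ℝ → ℝ) : ℝ :=
  ∑ i, D.prob i * g (D.val i)

/-- A family of distributions `(D_S)_{S ⊆ A}` is compatible with the expected-reward
function `R` if `E_{X ∼ D_S}[X] = R(S)` for every `S`. -/
def Compatible (n : ℕ) (R : Finset (Fin n) → ℝ) (D : Finset (Fin n) → FinDist) : Prop :=
  ∀ S : Finset (Fin n), (D S).exp id = R S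

/-- The agent's expected utility from action set `S` under contract `t`
and distributions `D`. -/
noncomputable def agentU (n : ℕ) (c : Fin n → ℝ) (t : ℝ → ℝ)
    (D : Finset (Fin n) → FinDist) (S : Finset (Fin n)) : ℝ :=
  (D S).exp t - ∑ a ∈ S, c a

/-- The principal's expected utility from action set `S` under contract `t`
and distributions `D`. -/
noncomputable def prinU (n : ℕ) (t : ℝ → ℝ)
    (D : Finset (Fin n) → FinDist) (S : Finset (Fin n)) : ℝ :=
  (D S).exp (fun x => x - t x)

/-- `S` is a best response to contract `t` given distributions `D`: it maximizes the
agent's utility and, among agent-utility maximizers, the principal's utility. -/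
def BR (n : ℕ) (c : Fin n → ℝ) (t : ℝ → ℝ) (D : Finset (Fin n) → FinDist)
    (S : Finset (Fin n)) : Prop :=
  (∀ T : Finset (Fin n), agentU n c t D T ≤ agentU n c t D S) ∧
  (∀ T : Finset (Fin n),
    (∀ T' : Finset (Fin n), agentU n c t D T' ≤ agentU n c t D T) →
    prinU n t D T ≤ prinU n t D S)

theorem exists_lex_max {ι κ : Type*} [Fintype ι] [Nonempty ι] [LinearOrder κ] (f g : ι → κ) :
    ∃ i, (∀ j, f j ≤ f i) ∧ ∀ j, (∀ k, f k ≤ f j) → g j ≤ g i := by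
  classical
  obtain ⟨i₀, hi₀⟩ := Finite.exists_max f
  obtain ⟨i, hi, hmax⟩ :=
    (univ.filter fun j => ∀ k, f k ≤ f j).exists_max_image g ⟨i₀, by simpa using hi₀⟩
  exact ⟨i, (mem_filter.1 hi).2, fun j hj => hmax j (by simpa using hj)⟩

theorem one_sub_mul_nonpos_of_forall_le {ι : Type*} {R : Finset ι → ℝ} {c : ι → ℝ} {β : ℝ}
    {S : Finset ι} (hβ : β ∉ Set.Icc 0 1) (hR0 : R ∅ = 0) (hRS : 0 ≤ R S) (hc : ∀ a, 0 ≤ c a)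
    (hS : ∀ T, β * R T - ∑ a ∈ T, c a ≤ β * R S - ∑ a ∈ S, c a) :
    (1 - β) * R S ≤ 0 := by
  rcases lt_or_ge β 0 with hβ0 | hβ0
  · have hcS : 0 ≤ ∑ a ∈ S, c a := sum_nonneg fun a _ => hc a
    have hempty := hS ∅
    rw [hR0, sum_empty] at hempty
    have hRS' : R S ≤ 0 := nonpos_of_mul_nonneg_right (by linarith) hβ0
    exact mul_nonpos_of_nonneg_of_nonpos (by linarith) hRS'
  · have hβ1 : 1 < β := by
      by_contra! h
      exact hβ ⟨hβ0, h⟩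
    exact mul_nonpos_of_nonpos_of_nonneg (by linarith) hRS

namespace FinDist

theorem exp_linear (D : FinDist) (α : ℝ) : D.exp (fun x => α * x) = α * D.exp id := by
  simp only [exp, id, mul_sum]
  exact sum_congr rfl fun i _ => by ring

theorem exp_sub_linear (D : FinDist) (α : ℝ) :
    D.exp (fun x => x - α * x) = (1 - α) * D.exp id := by
  simp only [exp, id, mul_sum]
  exact sum_congr rfl fun i _ => by ring

noncomputable def twoPoint (r p : ℝ) (hr : 0 ≤ r) (hp : p ∈ Set.Icc 0 1) : FinDist where
  m := 2
  val := ![r, 0]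
  prob := ![p, 1 - p]
  val_nonneg i := by fin_cases i <;> simp [hr]
  prob_nonneg i := by fin_cases i <;> simp [hp.1, hp.2]
  prob_sum := by simp [Fin.sum_univ_two]

theorem exp_twoPoint (r p : ℝ) (hr : 0 ≤ r) (hp : p ∈ Set.Icc 0 1) (g : ℝ → ℝ) :
    (twoPoint r p hr hp).exp g = p * g r + (1 - p) * g 0 :=
  Fin.sum_univ_two _

theorem exp_twoPoint_eq_affine {r p : ℝ} (hr : 0 < r) (hp : p ∈ Set.Icc 0 1) (g : ℝ → ℝ) :
    (twoPoint r p hr.le hp).exp g = g 0 + (g r - g 0) / r * (twoPoint r p hr.le hp).exp id := by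
  simp only [exp_twoPoint, id]
  field_simp
  ring

end FinDist

theorem exists_BR {n : ℕ} (c : Fin n → ℝ) (t : ℝ → ℝ) (D : Finset (Fin n) → FinDist) :
    ∃ S, BR n c t D S :=
  exists_lex_max (agentU n c t D) (prinU n t D)

section Utilities

variable {n : ℕ} {R : Finset (Fin n) → ℝ} {c : Fin n → ℝ} {D : Finset (Fin n) → FinDist}

theorem agentU_linear (hD : Compatible n R D) (α : ℝ) (S : Finset (Fin n)) :
    agentU n c (fun x => α * x) D S = α * R S - ∑ a ∈ S, c a := by
  rw [agentU, FinDist.exp_linear, hD S]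

theorem prinU_linear (hD : Compatible n R D) (α : ℝ) (S : Finset (Fin n)) :
    prinU n (fun x => α * x) D S = (1 - α) * R S := by
  rw [prinU, FinDist.exp_sub_linear, hD S]

theorem le_prinU_of_BR_linear {α : ℝ} {S S' : Finset (Fin n)} (hD : Compatible n R D)
    (hS' : BR n c (fun x => α * x) D S')
    (hS : ∀ T, α * R T - ∑ a ∈ T, c a ≤ α * R S - ∑ a ∈ S, c a) :
    (1 - α) * R S ≤ prinU n (fun x => α * x) D S' := by
  have h := hS'.2 S fun T => by simpa only [agentU_linear hD] using hS T
  rwa [prinU_linear hD] at h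

theorem exists_compatible_twoPoint {r : ℝ} (hr : 0 < r) (hR : ∀ S, R S ∈ Set.Icc 0 r) :
    ∃ D : Finset (Fin n) → FinDist, Compatible n R D ∧
      ∀ S g, (D S).exp g = g 0 + (g r - g 0) / r * R S := by
  have hp : ∀ S, R S / r ∈ Set.Icc 0 1 := fun S =>
    ⟨div_nonneg (hR S).1 hr.le, (div_le_one hr).2 (hR S).2⟩
  have hD : Compatible n R fun S => FinDist.twoPoint r (R S / r) hr.le (hp S) := fun S => by
    rw [FinDist.exp_twoPoint]
    field_simp
    simp
  exact ⟨_, hD, fun S g => by rw [FinDist.exp_twoPoint_eq_affine hr, hD S]⟩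

end Utilities

theorem linear_contracts_maxmin_optimal_general (n : ℕ) (R : Finset (Fin n) → ℝ) (c : Fin n → ℝ)
    (hR0 : R ∅ = 0) (hRmono : ∀ S T : Finset (Fin n), S ⊆ T → R S ≤ R T)
    (hRnn : ∀ S : Finset (Fin n), 0 ≤ R S)
    (hc : ∀ a : Fin n, 0 < c a)
    (t : ℝ → ℝ) (ht : ∀ x : ℝ, 0 ≤ x → 0 ≤ t x) :
    ∃ α : ℝ, 0 ≤ α ∧ α ≤ 1 ∧
      ∀ u : ℝ,
        (∀ D : Finset (Fin n) → FinDist, Compatible n R D →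
          ∀ S : Finset (Fin n), BR n c t D S → u ≤ prinU n t D S) →
        (∀ D : Finset (Fin n) → FinDist, Compatible n R D →
          ∀ S : Finset (Fin n), BR n c (fun x => α * x) D S →
            u ≤ prinU n (fun x => α * x) D S) := by
  set r := R univ + 1
  have hr : 0 < r := by linarith [hRnn univ]
  obtain ⟨D, hD, hexp⟩ := exists_compatible_twoPoint (n := n) hr fun S =>
    ⟨hRnn S, by linarith [hRmono S univ (subset_univ S)]⟩
  set β := (t r - t 0) / r
  obtain ⟨S, hS⟩ := exists_BR c t D
  have hSmax : ∀ T, β * R T - ∑ a ∈ T, c a ≤ β * R S - ∑ a ∈ S, c a := fun T => by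
    have h := hS.1 T
    simp only [agentU, hexp] at h
    linarith
  have hprin : prinU n t D S = (1 - β) * R S - t 0 := by
    rw [prinU, hexp]
    unfold β
    field_simp
    ring
  have ht0 := ht 0 le_rfl
  by_cases hβ : β ∈ Set.Icc 0 1
  · refine ⟨β, hβ.1, hβ.2, fun u hu D' hD' S' hS' => ?_⟩
    linarith [hu D hD S hS, le_prinU_of_BR_linear hD' hS' hSmax]
  · refine ⟨1, zero_le_one, le_rfl, fun u hu D' hD' S' hS' => ?_⟩
    rw [prinU_linear hD', sub_self, zero_mul]
    linarith [hu D hD S hS,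
      one_sub_mul_nonpos_of_forall_le hβ hR0 (hRnn S) (fun a => (hc a).le) hSmax]

/-- Linear contracts are max-min optimal: for every contract `t` there is a linear
contract `α ∈ [0,1]` whose worst-case principal utility (over all compatible
distribution families) is at least that of `t`: every lower bound on the worst-case
utility of `t` is also a lower bound on the worst-case utility of the linear contract. -/
theorem linear_contracts_maxmin_optimal (n : ℕ) (R : Finset (Fin n) → ℝ) (c : Fin n → ℝ)
    (hR0 : R ∅ = 0) (hRmono : ∀ S T : Finset (Fin n), S ⊆ T → R S ≤ R T)
    (hRnn : ∀ S : Finset (Fin n), 0 ≤ R S) (hRA : 0 < R Finset.univ)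
    (hc : ∀ a : Fin n, 0 < c a)
    (t : ℝ → ℝ) (ht : ∀ x : ℝ, 0 ≤ x → 0 ≤ t x) :
    ∃ α : ℝ, 0 ≤ α ∧ α ≤ 1 ∧
      ∀ u : ℝ,
        (∀ D : Finset (Fin n) → FinDist, Compatible n R D →
          ∀ S : Finset (Fin n), BR n c t D S → u ≤ prinU n t D S) →
        (∀ D : Finset (Fin n) → FinDist, Compatible n R D →
          ∀ S : Finset (Fin n), BR n c (fun x => α * x) D S →
            u ≤ prinU n (fun x => α * x) D S) :=
  linear_contracts_maxmin_optimal_general n R c hR0 hRmono hRnn hc t ht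
end

section
/- Let f : 2^{{1,…,n}} → ℝ_{≥0} be a coverage function and let β2 ≥ β1 ≥ 1 be real numbers. Define g on the ground set {1,…,n+1} by g(S) = β1·f(S) if n+1 ∉ S, and g(S) = β2·f({1,…,n}) + f(S \ {n+1}) if n+1 ∈ S. Then g is a coverage function. -/
open Finset

namespace CoverageAux

/-- Any coverage representation over an arbitrary finite universe gives `IsCoverage`. -/
lemma isCoverage_of_fintype {A : Type*} [DecidableEq A] (f : Finset A → ℝ)
    (U : Type*) [Fintype U] [DecidableEq U] (w : U → ℝ) (g : A → Finset U)
    (hw : ∀ j, 0 ≤ w j) (h : ∀ S : Finset A, f S = ∑ j ∈ S.biUnion g, w j) :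
    IsCoverage f := by
  let e := Fintype.equivFin U
  refine ⟨Fintype.card U, w ∘ e.symm, fun a => (g a).map e.toEmbedding, fun j => hw _, ?_⟩
  intro S
  have key : (S.biUnion fun a => (g a).map e.toEmbedding) = (S.biUnion g).map e.toEmbedding := by
    ext p
    simp only [Finset.mem_biUnion, Finset.mem_map]
    tauto
  rw [h S, key, Finset.sum_map]
  simp

def emb (m : ℕ) (k : Fin 3) : Fin m ↪ Fin m × Fin 3 :=
  ⟨fun j => (j, k), fun a b h => by simpa using congrArg Prod.fst h⟩

lemma mem_map_emb {m : ℕ} {k : Fin 3} {s : Finset (Fin m)} {p : Fin m × Fin 3} :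
    p ∈ s.map (emb m k) ↔ p.1 ∈ s ∧ p.2 = k := by
  constructor
  · rintro hp
    obtain ⟨a, ha, rfl⟩ := Finset.mem_map.mp hp
    exact ⟨ha, rfl⟩
  · rintro ⟨h1, h2⟩
    exact Finset.mem_map.mpr ⟨p.1, h1, by simp [emb]; exact Prod.ext rfl h2.symm⟩

lemma sum_map_emb {m : ℕ} (w : Fin m → ℝ) (c : Fin 3 → ℝ) (k : Fin 3) (s : Finset (Fin m)) :
    ∑ p ∈ s.map (emb m k), c p.2 * w p.1 = c k * ∑ j ∈ s, w j := by
  rw [Finset.sum_map, Finset.mul_sum]; rfl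

lemma disj_emb {m : ℕ} {k k' : Fin 3} (h : k ≠ k') (s t : Finset (Fin m)) :
    Disjoint (s.map (emb m k)) (t.map (emb m k')) := by
  rw [Finset.disjoint_left]
  intro p hp hq
  rw [mem_map_emb] at hp hq
  exact h (hp.2 ▸ hq.2 ▸ rfl)

end CoverageAux

open CoverageAux in
/-- The extension of a coverage function `f` by a fresh action (modelled by `none` in
`Option (Fin n)`), given by `g(S) = β₁·f(S)` if the fresh action is not in `S` and
`g(S) = β₂·f(A) + f(S \ {fresh})` otherwise, is again a coverage function
(for `β₂ ≥ β₁ ≥ 1`). -/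
theorem coverage_extension (n : ℕ) (f : Finset (Fin n) → ℝ)
    (hf : IsCoverage f) (β1 β2 : ℝ) (hβ1 : 1 ≤ β1) (hβ12 : β1 ≤ β2) :
    IsCoverage (fun S : Finset (Option (Fin n)) =>
      if none ∈ S then β2 * f Finset.univ + f S.eraseNone
      else β1 * f S.eraseNone) := by
  obtain ⟨m, w, g, hw, hsum⟩ := hf
  set T : Finset (Fin m) := Finset.univ.biUnion g with hT
  set c : Fin 3 → ℝ := ![1, β1 - 1, β2 - β1 + 1] with hc
  set w' : Fin m × Fin 3 → ℝ := fun p => c p.2 * w p.1 with hw'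
  set g' : Option (Fin n) → Finset (Fin m × Fin 3) := fun a =>
    match a with
    | some i => (g i).map (emb m 0) ∪ (g i).map (emb m 1)
    | none => T.map (emb m 1) ∪ T.map (emb m 2) with hg'
  apply isCoverage_of_fintype _ (Fin m × Fin 3) w' g'
  · intro p
    obtain ⟨p1, p2⟩ := p
    have : 0 ≤ c p2 := by
      fin_cases p2 <;> simp [hc] <;> linarith
    exact mul_nonneg this (hw _)
  · intro S
    by_cases hnone : none ∈ S
    · have hB : S.biUnion g' =
          ((S.eraseNone.biUnion g).map (emb m 0) ∪ T.map (emb m 1)) ∪ T.map (emb m 2) := by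
        ext p
        simp only [Finset.mem_biUnion, Finset.mem_union, Finset.mem_eraseNone, mem_map_emb]
        constructor
        · rintro ⟨a, ha, hp⟩
          match a with
          | none =>
            simp only [hg', Finset.mem_union, mem_map_emb] at hp
            tauto
          | some i =>
            simp only [hg', Finset.mem_union, mem_map_emb] at hp
            rcases hp with h | h
            · exact Or.inl (Or.inl ⟨⟨i, ha, h.1⟩, h.2⟩)
            · refine Or.inl (Or.inr ⟨?_, h.2⟩)
              exact Finset.mem_biUnion.mpr ⟨i, Finset.mem_univ i, h.1⟩
        · rintro ((⟨⟨i, hi, hp1⟩, hp2⟩ | ⟨h1, h2⟩) | ⟨h1, h2⟩)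
          · exact ⟨some i, hi, by simp only [hg', Finset.mem_union, mem_map_emb]; tauto⟩
          · exact ⟨none, hnone, by simp only [hg', Finset.mem_union, mem_map_emb]; tauto⟩
          · exact ⟨none, hnone, by simp only [hg', Finset.mem_union, mem_map_emb]; tauto⟩
      rw [hB, Finset.sum_union, Finset.sum_union, sum_map_emb, sum_map_emb, sum_map_emb]
      · simp only [hnone, if_pos, hsum, ← hT, hc]
        simp
        ring
      · exact disj_emb (by decide) _ _
      · rw [Finset.disjoint_union_left]
        exact ⟨disj_emb (by decide) _ _, disj_emb (by decide) _ _⟩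
    · have hB : S.biUnion g' =
          (S.eraseNone.biUnion g).map (emb m 0) ∪ (S.eraseNone.biUnion g).map (emb m 1) := by
        ext p
        simp only [Finset.mem_biUnion, Finset.mem_union, Finset.mem_eraseNone, mem_map_emb]
        constructor
        · rintro ⟨a, ha, hp⟩
          match a with
          | none => exact absurd ha hnone
          | some i =>
            simp only [hg', Finset.mem_union, mem_map_emb] at hp
            rcases hp with h | h
            · exact Or.inl ⟨⟨i, ha, h.1⟩, h.2⟩
            · exact Or.inr ⟨⟨i, ha, h.1⟩, h.2⟩
        · rintro (⟨⟨i, hi, hp1⟩, hp2⟩ | ⟨⟨i, hi, hp1⟩, hp2⟩) <;>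
            exact ⟨some i, hi, by simp only [hg', Finset.mem_union, mem_map_emb]; tauto⟩
      rw [hB, Finset.sum_union (disj_emb (by decide) _ _), sum_map_emb, sum_map_emb]
      simp only [hnone, if_neg, hsum, hc]
      simp
      ring
end

section
/- Let f be a gross substitutes function and let c be generic with respect to f. Let α', α ∈ C_{f,c} be neighboring critical values, i.e., α' < α and (α', α) ∩ C_{f,c} = ∅. Then there exist sets S ∈ D*_{f,c}(α) and S' ∈ D*_{f,c}(α') such that either (i) S' = S \ {a} for some a ∈ S, or (ii) S' = (S \ {a1}) ∪ {a2} for some a1 ∈ S and a2 ∉ S with c(a2) < c(a1). -/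
open Finset

/-- `D*_{f,c}(α)`: the demanded sets maximizing the principal's value `f`. -/
def Dstar (n : ℕ) (f : Finset (Fin n) → ℝ) (c : Fin n → ℝ) (α : ℝ) :
    Set (Finset (Fin n)) :=
  {S | S ∈ Demand n f c α ∧ ∀ T ∈ Demand n f c α, f T ≤ f S}

/-! The principal-optimal set `S'` at `α'` stays demanded up to the first contract at which some
set of larger value ties with it, and that contract is critical; as no critical value lies strictly
between `α'` and `α`, `S'` is still demanded at `α`, beside some `S ∈ D*(α)` with `f S > f S'`.
Gross substitutes lets one trade an action `a ∈ S \ S'` for at most one action of `S'` while staying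
in demand at `α`, and genericity forbids two such trades at `α` with different outgoing actions.
Hence the traded set lies inside `S'`, so it is as good as `S'` at `α'`. -/

def PriceDemand {n : ℕ} (f : Finset (Fin n) → ℝ) (p : Fin n → ℝ) : Set (Finset (Fin n)) :=
  {S | ∀ T : Finset (Fin n), f T - ∑ i ∈ T, p i ≤ f S - ∑ i ∈ S, p i}

section

variable {n : ℕ} {f : Finset (Fin n) → ℝ} {c : Fin n → ℝ}

theorem GrossSubstitutes.exists_exchange (hgs : GrossSubstitutes n f) {p : Fin n → ℝ}
    (hp : ∀ i, 0 ≤ p i) {U W : Finset (Fin n)} (hU : U ∈ PriceDemand f p)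
    (hW : W ∈ PriceDemand f p) {b : Fin n} (hbU : b ∈ U) (hbW : b ∉ W) :
    ∃ T ∈ PriceDemand f p, b ∉ T ∧ U.erase b ⊆ T ∧ T ⊆ U.erase b ∪ W := by
  -- Raise by one the prices of `b` and of the items outside `U ∪ W`: `W` pays nothing extra.
  set P : Finset (Fin n) := insert b (univ \ (U ∪ W))
  set q : Fin n → ℝ := fun i => p i + if i ∈ P then 1 else 0
  have hsum_q : ∀ R : Finset (Fin n), ∑ i ∈ R, q i = ∑ i ∈ R, p i + #(R ∩ P) := by
    intro R
    simp only [q, sum_add_distrib, sum_boole, filter_mem_eq_inter]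
  have hWP : W ∩ P = ∅ := by
    ext i
    simp only [P, mem_inter, mem_insert, mem_sdiff, mem_univ, mem_union, true_and,
      notMem_empty, iff_false]
    rintro ⟨hiW, rfl | hi⟩
    exacts [hbW hiW, hi (Or.inr hiW)]
  obtain ⟨T, hTq, hUT⟩ := hgs p q hp (fun i => le_add_of_nonneg_right (by positivity)) U hU
  have hTW := hTq W
  rw [hsum_q, hsum_q, hWP, card_empty, Nat.cast_zero, add_zero] at hTW
  have hTP : T ∩ P = ∅ := by
    rw [← card_eq_zero, ← Nat.cast_eq_zero (R := ℝ)]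
    exact le_antisymm (by linarith [hW U, hU T]) (Nat.cast_nonneg _)
  have hnotP : ∀ i ∈ T, i ∉ P := fun i hi hiP => by simpa [hTP] using mem_inter.2 ⟨hi, hiP⟩
  refine ⟨T, fun R => ?_, fun hbT => hnotP b hbT (mem_insert_self _ _), ?_, ?_⟩
  · rw [hTP, card_empty, Nat.cast_zero, add_zero] at hTW
    linarith [hU R, hW U]
  · intro i hi
    obtain ⟨hib, hiU⟩ := mem_erase.1 hi
    refine hUT i hiU ?_
    have hiP : i ∉ P := by simp [P, hib, hiU]
    simp [q, hiP]
  · intro i hi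
    have hiP := hnotP i hi
    simp only [P, mem_insert, mem_sdiff, mem_univ, true_and, not_or, not_not] at hiP
    rcases mem_union.1 hiP.2 with hiU | hiW
    exacts [mem_union_left _ (mem_erase.2 ⟨hiP.1, hiU⟩), mem_union_right _ hiW]

theorem Demand_eq_PriceDemand {α : ℝ} (hα : 0 < α) :
    Demand n f c α = PriceDemand f (fun i => c i / α) := by
  have hscale : ∀ R : Finset (Fin n), f R - ∑ i ∈ R, c i / α = (α * f R - ∑ a ∈ R, c a) / α := by
    intro R
    rw [← sum_div]
    field_simp
  ext S
  simp only [Demand, PriceDemand, hscale, div_le_div_iff_of_pos_right hα]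

theorem nonempty_Demand (α : ℝ) : (Demand n f c α).Nonempty :=
  Finite.exists_max fun S : Finset (Fin n) => α * f S - ∑ a ∈ S, c a

theorem nonempty_Dstar (α : ℝ) : (Dstar n f c α).Nonempty := by
  obtain ⟨S, hS, hmax⟩ := Set.exists_max_image _ f (Set.toFinite _) (nonempty_Demand (c := c) α)
  exact ⟨S, hS, hmax⟩

theorem Vfc_eq_of_mem_Dstar {α : ℝ} {S : Finset (Fin n)} (hS : S ∈ Dstar n f c α) :
    Vfc n f c α = f S :=
  IsGreatest.csSup_eq ⟨⟨S, hS.1, rfl⟩, by rintro _ ⟨T, hT, rfl⟩; exact hS.2 T hT⟩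

theorem utility_eq_of_mem_Demand {α : ℝ} {U T : Finset (Fin n)} (hU : U ∈ Demand n f c α)
    (hT : T ∈ Demand n f c α) : α * f U - ∑ a ∈ U, c a = α * f T - ∑ a ∈ T, c a :=
  le_antisymm (hT U) (hU T)

theorem f_le_of_mem_Demand_of_lt {β γ : ℝ} (hβγ : β < γ) {U W : Finset (Fin n)}
    (hU : U ∈ Demand n f c β) (hW : W ∈ Demand n f c γ) : f U ≤ f W := by
  by_contra! h
  nlinarith [hU W, hW U, mul_pos (sub_pos.2 hβγ) (sub_pos.2 h)]

theorem f_le_of_mem_Dstar_of_le {β γ : ℝ} (hγβ : γ ≤ β) {S U : Finset (Fin n)}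
    (hS : S ∈ Dstar n f c β) (hU : U ∈ Demand n f c γ) : f U ≤ f S := by
  rcases hγβ.lt_or_eq with hlt | rfl
  exacts [f_le_of_mem_Demand_of_lt hlt hU hS.1, hS.2 U hU]

theorem mem_Dstar_of_mem_Demand_of_f_eq {α α' : ℝ} {S T : Finset (Fin n)}
    (hS' : S ∈ Dstar n f c α') (hS : S ∈ Demand n f c α) (hT : T ∈ Demand n f c α)
    (hf : f T = f S) : T ∈ Dstar n f c α' := by
  have hcost : ∑ a ∈ T, c a = ∑ a ∈ S, c a := by
    have htie := utility_eq_of_mem_Demand hS hT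
    rw [hf] at htie
    linarith
  refine ⟨fun R => ?_, fun R hR => hf ▸ hS'.2 R hR⟩
  rw [hf, hcost]
  exact hS'.1 R

theorem cost_lt_of_swap_mem_Demand {α : ℝ} (hα : 0 < α) {S : Finset (Fin n)} {a x : Fin n}
    (ha : a ∈ S) (hx : x ∉ S) (hS : S ∈ Demand n f c α)
    (hT : insert x (S.erase a) ∈ Demand n f c α) (hf : f (insert x (S.erase a)) < f S) :
    c x < c a := by
  have hcostT := sum_insert (s := S.erase a) (f := c) fun h => hx (mem_of_mem_erase h)
  have hcostS := add_sum_erase S c ha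
  nlinarith [utility_eq_of_mem_Demand hS hT, mul_pos hα (sub_pos.2 hf)]

/-- `r` is the first contract from `β` on at which a set of larger value than `S` ties with `S`. -/
theorem exists_breakpoint {β : ℝ} {S U₀ : Finset (Fin n)} (hS : S ∈ Demand n f c β)
    (hU₀ : f S < f U₀) :
    ∃ r U, f S < f U ∧ U ∈ Demand n f c r ∧
      (∀ γ, β ≤ γ → γ ≤ r → S ∈ Demand n f c γ) ∧
      (∀ γ, β ≤ γ → γ < r → ∀ T ∈ Demand n f c γ, f T ≤ f S) := by
  set ratio : Finset (Fin n) → ℝ := fun U => (∑ a ∈ U, c a - ∑ a ∈ S, c a) / (f U - f S)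
  obtain ⟨U, hU, hmin⟩ :=
    (univ.filter fun U => f S < f U).exists_min_image ratio ⟨U₀, by simpa using hU₀⟩
  rw [mem_filter] at hU
  set r := ratio U
  have hr : ∀ T, f S < f T → r * (f T - f S) ≤ ∑ a ∈ T, c a - ∑ a ∈ S, c a := fun T hT =>
    (le_div_iff₀ (sub_pos.2 hT)).1 (hmin T (mem_filter.2 ⟨mem_univ _, hT⟩))
  have hrU : r * (f U - f S) = ∑ a ∈ U, c a - ∑ a ∈ S, c a :=
    div_mul_cancel₀ _ (sub_pos.2 hU.2).ne'
  have hβr : β ≤ r := (le_div_iff₀ (sub_pos.2 hU.2)).2 (by linarith [hS U])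
  have hSdem : ∀ γ, β ≤ γ → γ ≤ r → S ∈ Demand n f c γ := by
    intro γ hβγ hγr T
    rcases lt_or_ge (f S) (f T) with hT | hT
    · nlinarith [hr T hT, mul_le_mul_of_nonneg_right hγr (sub_pos.2 hT).le]
    · nlinarith [hS T, mul_le_mul_of_nonneg_right hβγ (sub_nonneg.2 hT)]
  refine ⟨r, U, hU.2, fun T => ?_, hSdem, fun γ hβγ hγr T hT => ?_⟩
  · linarith [hSdem r hβr le_rfl T]
  · by_contra! hST
    nlinarith [hT S, hr T hST, mul_lt_mul_of_pos_right hγr (sub_pos.2 hST)]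

theorem exists_mem_Critical_Ioo_of_notMem_Demand {α' β : ℝ} {S : Finset (Fin n)}
    (hS : S ∈ Dstar n f c α') (hα' : 0 < α') (hα'β : α' ≤ β) (hβ : β ≤ 1)
    (hSβ : S ∉ Demand n f c β) : ∃ r ∈ Set.Ioo α' β, r ∈ Critical n f c := by
  obtain ⟨T, hT⟩ : ∃ T, ¬ β * f T - ∑ a ∈ T, c a ≤ β * f S - ∑ a ∈ S, c a := by
    simpa [Demand] using hSβ
  have hfT : f S < f T := by
    by_contra! h
    nlinarith [hS.1 T, mul_nonneg (sub_nonneg.2 hα'β) (sub_nonneg.2 h)]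
  obtain ⟨r, U, hfU, hUr, hSdem, hle⟩ := exists_breakpoint hS.1 hfT
  have hrβ : r < β := lt_of_not_ge fun h => hSβ (hSdem β hα'β h)
  have hα'r : α' < r := lt_of_not_ge fun h => (f_le_of_mem_Dstar_of_le h hS hUr).not_gt hfU
  refine ⟨r, ⟨hα'r, hrβ⟩, by linarith, by linarith, fun δ hδ _ => ?_⟩
  obtain ⟨R, hR⟩ := nonempty_Dstar (f := f) (c := c) (r - δ)
  obtain ⟨Rr, hRr⟩ := nonempty_Dstar (f := f) (c := c) r
  have hRS : f R ≤ f S := by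
    rcases le_or_gt α' (r - δ) with h | h
    · exact hle _ h (by linarith) R hR.1
    · exact f_le_of_mem_Dstar_of_le h.le hS hR.1
  rw [Vfc_eq_of_mem_Dstar hR, Vfc_eq_of_mem_Dstar hRr]
  exact (hRS.trans_lt (hfU.trans_le (hRr.2 U hUr))).ne

theorem mem_Cand_some_none {α : ℝ} (hα : 0 < α) {R : Finset (Fin n)} {b : Fin n} (hb : b ∉ R)
    (hbR : insert b R ∈ Demand n f c α) (hR : R ∈ Demand n f c α) :
    α ∈ Cand n f c (some b) none := by
  refine ⟨hα, R, ∅, ?_, by simp [margOpt, cOpt]⟩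
  have hcost := sum_insert (f := c) hb
  simp only [margOpt, cOpt, Option.elim]
  linarith [utility_eq_of_mem_Demand hbR hR]

theorem mem_Cand_some_some {α : ℝ} (hα : 0 < α) {R : Finset (Fin n)} {b x : Fin n}
    (hb : b ∉ R) (hx : x ∉ R) (hbR : insert b R ∈ Demand n f c α)
    (hxR : insert x R ∈ Demand n f c α) :
    α ∈ Cand n f c (some b) (some x) := by
  have hcostb := sum_insert (f := c) hb
  have hcostx := sum_insert (f := c) hx
  refine ⟨hα, R, R, ?_, ?_⟩ <;> simp only [margOpt, cOpt, Option.elim]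
  · linarith [utility_eq_of_mem_Demand hbR hxR]
  · linarith [hxR R]

theorem Generic.eq_of_mem_Cand (hgen : Generic n f c) {α : ℝ} (hα : 0 < α)
    {W : Finset (Fin n)} {a a' : Fin n} {o o' : Option (Fin n)} (ha : a ∉ W) (ha' : a' ∉ W)
    (ho : ∀ x ∈ o, x ∈ W) (ho' : ∀ x ∈ o', x ∈ W) (h : α ∈ Cand n f c (some a) o)
    (h' : α ∈ Cand n f c (some a') o') : a = a' := by
  have hne : ∀ {a o}, a ∉ W → (∀ x ∈ o, x ∈ W) → some a ≠ o := fun ha ho hao =>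
    ha (ho _ (hao ▸ rfl))
  rcases hgen α hα _ _ _ _ (hne ha ho) (hne ha' ho') h h' with ⟨h1, -⟩ | ⟨h1, -⟩
  · exact Option.some_injective _ h1
  · exact absurd (ho' a (h1 ▸ rfl)) ha

theorem exists_Demand_exchange (hc : ∀ a, 0 ≤ c a) (hgs : GrossSubstitutes n f) {α : ℝ}
    (hα : 0 < α) {U W : Finset (Fin n)} (hU : U ∈ Demand n f c α) (hW : W ∈ Demand n f c α)
    {b : Fin n} (hbU : b ∈ U) (hbW : b ∉ W) :
    ∃ T ∈ Demand n f c α, b ∉ T ∧ U.erase b ⊆ T ∧ T ⊆ U.erase b ∪ W := by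
  rw [Demand_eq_PriceDemand hα] at hU hW ⊢
  exact hgs.exists_exchange (fun i => div_nonneg (hc i) hα.le) hU hW hbU hbW

theorem exists_mem_Cand_of_mem_sdiff (hc : ∀ a, 0 ≤ c a) (hgs : GrossSubstitutes n f)
    {α : ℝ} (hα : 0 < α) {T U : Finset (Fin n)} (hT : T ∈ Demand n f c α)
    (hU : U ∈ Demand n f c α) {b z : Fin n} (hbU : b ∈ U) (hbT : b ∉ T) (hUT : U.erase b ⊆ T)
    (hzT : z ∈ T) (hzU : z ∉ U) :
    ∃ o : Option (Fin n), α ∈ Cand n f c (some z) o ∧ ∀ x ∈ o, x ∈ U := by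
  obtain ⟨T₂, hT₂, hzT₂, hsub, hsup⟩ := exists_Demand_exchange hc hgs hα hT hU hzT hzU
  -- Since `U ⊆ insert b T`, exchanging `z` against `U` can only bring in `b`.
  have hsup' : T₂ ⊆ insert b (T.erase z) := by
    intro i hi
    rcases mem_union.1 (hsup hi) with h | h
    · exact mem_insert_of_mem h
    · rcases eq_or_ne i b with rfl | hib
      · exact mem_insert_self _ _
      · exact mem_insert_of_mem
          (mem_erase.2 ⟨ne_of_mem_of_not_mem hi hzT₂, hUT (mem_erase.2 ⟨hib, h⟩)⟩)
  rw [← insert_erase hzT] at hT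
  by_cases hbT₂ : b ∈ T₂
  · have hT₂e : T₂ = insert b (T.erase z) := hsup'.antisymm (insert_subset hbT₂ hsub)
    refine ⟨some b, ?_, by simpa using hbU⟩
    exact mem_Cand_some_some hα (notMem_erase _ _) (fun h => hbT (mem_of_mem_erase h)) hT
      (hT₂e ▸ hT₂)
  · have hT₂e : T₂ = T.erase z := ((subset_insert_iff_of_notMem hbT₂).1 hsup').antisymm hsub
    exact ⟨none, mem_Cand_some_none hα (notMem_erase _ _) hT (hT₂e ▸ hT₂), by simp⟩

theorem exists_single_exchange (hc : ∀ a, 0 ≤ c a) (hgs : GrossSubstitutes n f)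
    (hgen : Generic n f c) {α : ℝ} (hα : 0 < α) {U W : Finset (Fin n)}
    (hU : U ∈ Demand n f c α) (hW : W ∈ Demand n f c α) {b : Fin n} (hbU : b ∈ U)
    (hbW : b ∉ W) :
    ∃ T ∈ Demand n f c α, b ∉ T ∧ ∃ o : Option (Fin n),
      α ∈ Cand n f c (some b) o ∧ (∀ x ∈ o, x ∈ W) ∧
      (o = none ∧ T = U.erase b ∨ ∃ x, o = some x ∧ x ∉ U ∧ T = insert x (U.erase b)) := by
  obtain ⟨T, hT, hbT, hsub, hsup⟩ := exists_Demand_exchange hc hgs hα hU hW hbU hbW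
  refine ⟨T, hT, hbT, ?_⟩
  have hU' : insert b (U.erase b) ∈ Demand n f c α := by rwa [insert_erase hbU]
  by_cases hTU : T ⊆ U
  · have hTe : T = U.erase b :=
      subset_antisymm (fun i hi => mem_erase.2 ⟨ne_of_mem_of_not_mem hi hbT, hTU hi⟩) hsub
    exact ⟨none, mem_Cand_some_none hα (notMem_erase _ _) hU' (hTe ▸ hT), by simp,
      Or.inl ⟨rfl, hTe⟩⟩
  obtain ⟨x, hxT, hxU⟩ := not_subset.1 hTU
  have hTe : T = insert x (U.erase b) := by
    refine subset_antisymm (fun i hi => ?_) (insert_subset hxT hsub)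
    by_cases hiU : i ∈ U
    · exact mem_insert_of_mem (mem_erase.2 ⟨ne_of_mem_of_not_mem hi hbT, hiU⟩)
    · obtain ⟨o, ho, hoU⟩ := exists_mem_Cand_of_mem_sdiff hc hgs hα hT hU hbU hbT hsub hi hiU
      obtain ⟨o', ho', ho'U⟩ :=
        exists_mem_Cand_of_mem_sdiff hc hgs hα hT hU hbU hbT hsub hxT hxU
      rw [hgen.eq_of_mem_Cand hα hiU hxU hoU ho'U ho ho']
      exact mem_insert_self _ _
  have hxW : x ∈ W := by
    simpa [hxU] using hsup hxT
  refine ⟨some x, ?_, by simpa using hxW, Or.inr ⟨x, rfl, hxU, hTe⟩⟩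
  exact mem_Cand_some_some hα (notMem_erase _ _) (fun h => hxU (mem_of_mem_erase h)) hU'
    (hTe ▸ hT)

theorem subset_of_mem_Cand (hc : ∀ a, 0 ≤ c a) (hgs : GrossSubstitutes n f)
    (hgen : Generic n f c) {α : ℝ} (hα : 0 < α) {T W : Finset (Fin n)}
    (hT : T ∈ Demand n f c α) (hW : W ∈ Demand n f c α) {a : Fin n} (haT : a ∉ T) (haW : a ∉ W)
    {o : Option (Fin n)} (ho : ∀ x ∈ o, x ∈ W) (hcand : α ∈ Cand n f c (some a) o) : T ⊆ W := by
  intro i hiT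
  by_contra hiW
  obtain ⟨-, -, -, o', hcand', ho', -⟩ := exists_single_exchange hc hgs hgen hα hT hW hiT hiW
  exact haT (hgen.eq_of_mem_Cand hα haW hiW ho ho' hcand hcand' ▸ hiT)

end

theorem neighboring_criticals_structure_general (n : ℕ) (f : Finset (Fin n) → ℝ) (c : Fin n → ℝ)
    (hmono : ∀ S T : Finset (Fin n), S ⊆ T → f S ≤ f T)
    (hc : ∀ a : Fin n, 0 < c a)
    (hgs : GrossSubstitutes n f) (hgen : Generic n f c)
    (α' α : ℝ) (hα' : α' ∈ Critical n f c) (hα : α ∈ Critical n f c)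
    (hlt : α' < α) (hnb : Set.Ioo α' α ∩ Critical n f c = ∅) :
    ∃ S ∈ Dstar n f c α, ∃ S' ∈ Dstar n f c α',
      (∃ a ∈ S, S' = S.erase a) ∨
      (∃ a1 ∈ S, ∃ a2 : Fin n, a2 ∉ S ∧ c a2 < c a1 ∧
        S' = insert a2 (S.erase a1)) := by
  have hc0 : ∀ a, 0 ≤ c a := fun a => (hc a).le
  have hαpos : 0 < α := hα'.1.trans hlt
  obtain ⟨S', hS'⟩ := nonempty_Dstar (f := f) (c := c) α'
  obtain ⟨S, hS⟩ := nonempty_Dstar (f := f) (c := c) α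
  have hfS : f S' < f S := by
    refine (f_le_of_mem_Demand_of_lt hlt hS'.1 hS.1).lt_of_ne fun h => ?_
    refine hα.2.2 (α - α') (sub_pos.2 hlt) (by linarith [hα'.1]) ?_
    rw [sub_sub_cancel, Vfc_eq_of_mem_Dstar hS', Vfc_eq_of_mem_Dstar hS, h]
  have hS'α : S' ∈ Demand n f c α := by
    by_contra h
    obtain ⟨r, hr, hrc⟩ :=
      exists_mem_Critical_Ioo_of_notMem_Demand hS' hα'.1 hlt.le hα.2.1 h
    exact hnb.subset ⟨hr, hrc⟩
  obtain ⟨a, haS, haS'⟩ := not_subset.1 fun h => (hmono S S' h).not_gt hfS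
  obtain ⟨T, hT, haT, o, hcand, ho, hTo⟩ :=
    exists_single_exchange hc0 hgs hgen hαpos hS.1 hS'α haS haS'
  have hTS' : T ⊆ S' := subset_of_mem_Cand hc0 hgs hgen hαpos hT hS'α haT haS' ho hcand
  have hfT : f T = f S' := (hmono T S' hTS').antisymm (f_le_of_mem_Demand_of_lt hlt hS'.1 hT)
  refine ⟨S, hS, T, mem_Dstar_of_mem_Demand_of_f_eq hS' hS'α hT hfT, ?_⟩
  rcases hTo with ⟨-, rfl⟩ | ⟨x, -, hxS, rfl⟩
  · exact Or.inl ⟨a, haS, rfl⟩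
  · exact Or.inr ⟨a, haS, x, hxS,
      cost_lt_of_swap_mem_Demand hαpos haS hxS hS.1 hT (hfT.trans_lt hfS), rfl⟩

/-- For gross substitutes `f` and generic `c`, at neighboring critical values `α' < α`
the principal-optimal demanded set either loses a single action, or swaps an action
for a strictly cheaper one. -/
theorem neighboring_criticals_structure (n : ℕ) (f : Finset (Fin n) → ℝ) (c : Fin n → ℝ)
    (hf0 : f ∅ = 0) (hmono : ∀ S T : Finset (Fin n), S ⊆ T → f S ≤ f T)
    (hf01 : ∀ S : Finset (Fin n), 0 ≤ f S ∧ f S ≤ 1) (hc : ∀ a : Fin n, 0 < c a)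
    (hgs : GrossSubstitutes n f) (hgen : Generic n f c)
    (α' α : ℝ) (hα' : α' ∈ Critical n f c) (hα : α ∈ Critical n f c)
    (hlt : α' < α) (hnb : Set.Ioo α' α ∩ Critical n f c = ∅) :
    ∃ S ∈ Dstar n f c α, ∃ S' ∈ Dstar n f c α',
      (∃ a ∈ S, S' = S.erase a) ∨
      (∃ a1 ∈ S, ∃ a2 : Fin n, a2 ∉ S ∧ c a2 < c a1 ∧
        S' = insert a2 (S.erase a1)) :=
  neighboring_criticals_structure_general n f c hmono hc hgs hgen α' α hα' hα hlt hnb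
end
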